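/- arXiv:2308.07653 — 7 statements merged into one kernel-verified Lean document; each statement's English description precedes it below -/
import Mathlib

section
/- For every graph H, m(H) ≤ 2^{k'(H)}, where k'(H) denotes the edge-connectivity of H. That is, the maximum cardinality of a connectivity code for H is at most 2 raised to the edge-connectivity of H. -/
/-!
Let `F` be a set of `k'(H)` edges whose deletion disconnects `H`. Two distinct members of a
connectivity code have a connected symmetric difference inside `H`, so it cannot avoid `F`:
they differ on some edge of `F`. Hence `G ↦ E(G) ∩ F` is injective on the code, which therefore
has at most `2 ^ |F|` members. If no edge set disconnects `H`, then `V` has at most one vertex and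
there is only one graph on `V`.
-/

open SimpleGraph

/-- A collection `𝒢` of spanning subgraphs of `H` is a *connectivity code* for `H` if the
symmetric difference of any two distinct members of `𝒢` is a connected (spanning) subgraph
of `H`. -/
def IsConnCode {V : Type*} (H : SimpleGraph V) (𝒢 : Set (SimpleGraph V)) : Prop :=
  (∀ G ∈ 𝒢, G ≤ H) ∧
    ∀ G₁ ∈ 𝒢, ∀ G₂ ∈ 𝒢, G₁ ≠ G₂ → (symmDiff G₁ G₂).Connected

/-- `mCode H` is the maximum possible cardinality of a connectivity code for `H`. -/
noncomputable def mCode {V : Type*} [Fintype V] (H : SimpleGraph V) : ℕ :=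
  sSup {n : ℕ | ∃ 𝒢 : Set (SimpleGraph V), IsConnCode H 𝒢 ∧ 𝒢.ncard = n}

/-- The set of edges of `H` with one endpoint in `W` and the other in its complement. -/
def cutEdgeSet {V : Type*} (H : SimpleGraph V) (W : Set V) : Set (Sym2 V) :=
  {e | e ∈ H.edgeSet ∧ ∃ x ∈ W, ∃ y ∈ Wᶜ, e = s(x, y)}

/-- The edge-connectivity of `H`: the minimum number of edges whose deletion disconnects `H`. -/
noncomputable def edgeConn {V : Type*} [Fintype V] (H : SimpleGraph V) : ℕ :=
  sInf {n : ℕ | ∃ F : Set (Sym2 V), F ⊆ H.edgeSet ∧ F.ncard = n ∧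
    ¬(H.deleteEdges F).Connected}

namespace SimpleGraph

variable {V : Type*} {G₁ G₂ H : SimpleGraph V} {F : Set (Sym2 V)}

lemma edgeSet_symmDiff : (symmDiff G₁ G₂).edgeSet = symmDiff G₁.edgeSet G₂.edgeSet := by
  simp only [symmDiff_def, edgeSet_sup, edgeSet_sdiff, Set.sup_eq_union]

lemma symmDiff_le_deleteEdges (h₁ : G₁ ≤ H) (h₂ : G₂ ≤ H)
    (hF : G₁.edgeSet ∩ F = G₂.edgeSet ∩ F) : symmDiff G₁ G₂ ≤ H.deleteEdges F := by
  rw [← edgeSet_subset_edgeSet, edgeSet_deleteEdges, edgeSet_symmDiff]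
  intro e he
  have hH : e ∈ H.edgeSet := by
    rcases he with ⟨he, -⟩ | ⟨he, -⟩
    exacts [edgeSet_mono h₁ he, edgeSet_mono h₂ he]
  refine ⟨hH, fun heF => ?_⟩
  have := congrArg (e ∈ ·) hF
  simp only [Set.mem_inter_iff, heF, and_true, eq_iff_iff] at this
  rcases he with ⟨he, hne⟩ | ⟨he, hne⟩
  exacts [hne (this.1 he), hne (this.2 he)]

end SimpleGraph

namespace IsConnCode

variable {V : Type*} {H : SimpleGraph V} {𝒢 : Set (SimpleGraph V)} {F : Set (Sym2 V)}

lemma injOn_inter (h𝒢 : IsConnCode H 𝒢) (hF : ¬(H.deleteEdges F).Connected) :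
    Set.InjOn (fun G : SimpleGraph V => G.edgeSet ∩ F) 𝒢 := by
  intro G₁ hG₁ G₂ hG₂ hF₁₂
  by_contra hne
  exact hF ((h𝒢.2 G₁ hG₁ G₂ hG₂ hne).mono
    (symmDiff_le_deleteEdges (h𝒢.1 G₁ hG₁) (h𝒢.1 G₂ hG₂) hF₁₂))

lemma ncard_le_two_pow (h𝒢 : IsConnCode H 𝒢) (hF : ¬(H.deleteEdges F).Connected)
    (hFin : F.Finite) : 𝒢.ncard ≤ 2 ^ F.ncard := by
  rw [← Set.ncard_powerset F hFin]
  exact Set.ncard_le_ncard_of_injOn _ (fun G _ => Set.inter_subset_right)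
    (h𝒢.injOn_inter hF) (hFin.powerset)

end IsConnCode

/-- For every graph `H`, `m(H) ≤ 2 ^ k'(H)` where `k'(H)` is the edge-connectivity of `H`. -/
theorem stmt1 {V : Type*} [Fintype V] (H : SimpleGraph V) :
    mCode H ≤ 2 ^ edgeConn H := by
  refine csSup_le' ?_
  rintro _ ⟨𝒢, h𝒢, rfl⟩
  by_cases hS : {n : ℕ | ∃ F : Set (Sym2 V), F ⊆ H.edgeSet ∧ F.ncard = n ∧
      ¬(H.deleteEdges F).Connected}.Nonempty
  · obtain ⟨F, -, hFcard, hF⟩ := Nat.sInf_mem hS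
    rw [edgeConn, ← hFcard]
    exact h𝒢.ncard_le_two_pow hF F.toFinite
  · have hbot : (⊥ : SimpleGraph V).Connected := by
      by_contra hbot
      refine hS ⟨_, H.edgeSet, subset_rfl, rfl, ?_⟩
      rwa [deleteEdges_edgeSet, sdiff_self]
    have := (connected_bot_iff.mp hbot).1
    exact (Set.ncard_le_one_of_subsingleton 𝒢).trans Nat.one_le_two_pow
end

section
/- Let H = (V, E) be a d-regular graph, let E' be a subset of E, and let v : E' → (ℤ/2)^d be an assignment of a vector to each edge of E'. Suppose that for every vertex u, the set of vectors assigned to the edges of E' incident with u is linearly independent. Then the assignment can be completed to an assignment v : E → (ℤ/2)^d so that for every vertex u, the set of d vectors assigned to the d edges incident with u forms a basis of (ℤ/2)^d. -/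
open SimpleGraph

/-!
Greedy completion. Process the unlabelled edges one at a time. When the edge `xy` is reached,
fewer than `d` edges at `x` carry a label, and these labels are linearly independent, so they
span a proper subspace; the same holds at `y`. A vector space is never the union of two proper
subspaces, so some vector avoids both spans, and labelling `xy` with it keeps the labels at
every vertex independent. Once all edges are labelled, the `d` independent vectors at each
vertex form a basis of the `d`-dimensional space.
-/

open Set Module

theorem Submodule.exists_notMem_of_ne_top_of_ne_top {R M : Type*} [Ring R]
    [AddCommGroup M] [Module R M] {p q : Submodule R M} (hp : p ≠ ⊤) (hq : q ≠ ⊤) :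
    ∃ z, z ∉ p ∧ z ∉ q := by
  obtain ⟨a, ha⟩ := SetLike.exists_not_mem_of_ne_top p hp rfl
  obtain ⟨b, hb⟩ := SetLike.exists_not_mem_of_ne_top q hq rfl
  by_cases haq : a ∈ q
  · by_cases hbp : b ∈ p
    · refine ⟨a + b, fun h => ha ?_, fun h => hb ?_⟩
      · simpa using p.sub_mem h hbp
      · simpa using q.sub_mem h haq
    · exact ⟨b, hbp, hb⟩
  · exact ⟨a, ha, haq⟩

theorem LinearIndepOn.finrank_span_image_eq_ncard {ι K M : Type*} [DivisionRing K]
    [AddCommGroup M] [Module K M] {f : ι → M} {s : Set ι} (hf : LinearIndepOn K f s)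
    (hs : s.Finite) : finrank K (Submodule.span K (f '' s)) = s.ncard := by
  have := hs.fintype
  rw [image_eq_range, finrank_span_eq_card hf, ← Nat.card_eq_fintype_card,
    Nat.card_coe_set_eq]

theorem linearIndepOn_comp_val_iff {ι R M : Type*} [Semiring R] [AddCommMonoid M]
    [Module R M] {f : ι → M} {s t : Set ι} :
    LinearIndepOn R (f ∘ Subtype.val : s → M) {x | ↑x ∈ t} ↔ LinearIndepOn R f (s ∩ t) := by
  rw [← Subtype.image_preimage_coe]
  exact ⟨fun h => h.image_of_comp, fun h => h.comp_of_image Subtype.val_injective.injOn⟩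

namespace SimpleGraph

variable {V K M : Type*} (H : SimpleGraph V) [DivisionRing K] [AddCommGroup M] [Module K M]

theorem ncard_incidenceSet (u : V) : (H.incidenceSet u).ncard = (H.neighborSet u).ncard := by
  classical
  simp_rw [← Nat.card_coe_set_eq]
  exact Nat.card_congr (H.incidenceSetEquivNeighborSet u)

variable [Finite V]

theorem span_image_inter_incidenceSet_ne_top
    (hdeg : ∀ u, (H.incidenceSet u).ncard ≤ finrank K M) {A : Set (Sym2 V)} {w : Sym2 V → M}
    (hA : ∀ u, LinearIndepOn K w (A ∩ H.incidenceSet u)) {e : Sym2 V} (heA : e ∉ A) {u : V}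
    (hu : e ∈ H.incidenceSet u) : Submodule.span K (w '' (A ∩ H.incidenceSet u)) ≠ ⊤ := by
  intro htop
  have hlt : (A ∩ H.incidenceSet u).ncard < (H.incidenceSet u).ncard :=
    ncard_lt_ncard ⟨inter_subset_right, fun h => heA (h hu).1⟩ (toFinite _)
  have := (hA u).finrank_span_image_eq_ncard (toFinite _)
  rw [htop, finrank_top] at this
  exact (hdeg u).not_gt (this ▸ hlt)

theorem exists_update_linearIndepOn_insert [DecidableEq V]
    (hdeg : ∀ u, (H.incidenceSet u).ncard ≤ finrank K M) {A : Set (Sym2 V)} {w : Sym2 V → M}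
    (hA : ∀ u, LinearIndepOn K w (A ∩ H.incidenceSet u)) {e : Sym2 V} (he : e ∈ H.edgeSet)
    (heA : e ∉ A) :
    ∃ z, ∀ u, LinearIndepOn K (Function.update w e z) (insert e A ∩ H.incidenceSet u) := by
  induction e using Sym2.ind with | _ x y =>
  obtain ⟨z, hzx, hzy⟩ := Submodule.exists_notMem_of_ne_top_of_ne_top
    (H.span_image_inter_incidenceSet_ne_top hdeg hA heA ⟨he, Sym2.mem_mk_left x y⟩)
    (H.span_image_inter_incidenceSet_ne_top hdeg hA heA ⟨he, Sym2.mem_mk_right x y⟩)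
  have heq : EqOn (Function.update w s(x, y) z) w A := fun a ha =>
    Function.update_of_ne (ne_of_mem_of_not_mem ha heA) _ _
  refine ⟨z, fun u => ?_⟩
  by_cases hu : s(x, y) ∈ H.incidenceSet u
  · rw [insert_inter_of_mem hu, linearIndepOn_insert fun h => heA h.1,
      linearIndepOn_congr (heq.mono inter_subset_left), (heq.mono inter_subset_left).image_eq,
      Function.update_self]
    refine ⟨hA u, ?_⟩
    rcases Sym2.mem_iff.mp hu.2 with rfl | rfl
    exacts [hzx, hzy]
  · rw [insert_inter_of_notMem hu, linearIndepOn_congr (heq.mono inter_subset_left)]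
    exact hA u

theorem exists_extension_linearIndepOn_incidenceSet
    (hdeg : ∀ u, (H.incidenceSet u).ncard ≤ finrank K M) (A : Set (Sym2 V)) (w : Sym2 V → M)
    (hA : ∀ u, LinearIndepOn K w (A ∩ H.incidenceSet u)) :
    ∃ w' : Sym2 V → M, EqOn w' w A ∧ ∀ u, LinearIndepOn K w' (H.incidenceSet u) := by
  classical
  obtain ⟨F, hF⟩ := (toFinite (H.edgeSet \ A)).exists_finset_coe
  induction F using Finset.induction_on generalizing A w with
  | empty =>
    have hEA : H.edgeSet ⊆ A := sdiff_eq_empty.mp (by simpa using hF.symm)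
    refine ⟨w, eqOn_refl w A, fun u => ?_⟩
    simpa [inter_eq_right.mpr ((H.incidenceSet_subset u).trans hEA)] using hA u
  | insert e F heF ih =>
    have he : e ∈ H.edgeSet \ A := hF ▸ Finset.mem_coe.mpr (Finset.mem_insert_self e F)
    obtain ⟨z, hz⟩ := H.exists_update_linearIndepOn_insert hdeg hA he.1 he.2
    have hF' : (F : Set (Sym2 V)) = H.edgeSet \ insert e A := by
      rw [← union_singleton, ← sdiff_sdiff, ← hF, Finset.coe_insert,
        insert_sdiff_self_of_notMem (Finset.mem_coe.not.mpr heF)]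
    obtain ⟨w', hw', hind⟩ := ih (insert e A) _ hz hF'
    refine ⟨w', fun a ha => ?_, hind⟩
    rw [hw' (mem_insert_of_mem e ha), Function.update_of_ne (ne_of_mem_of_not_mem ha he.2)]

end SimpleGraph

/-- **Lemma 2.2.** Let `H` be `d`-regular, `E' ⊆ E(H)` and `v : E' → (ℤ/2)^d` be such that
for every vertex `u` the vectors assigned to the edges of `E'` incident with `u` are linearly
independent. Then the assignment extends to all of `E(H)` so that for every vertex the vectors
on the `d` incident edges form a basis of `(ℤ/2)^d`. -/
theorem stmt3 {V : Type*} [Fintype V] (H : SimpleGraph V) (d : ℕ)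
    (hreg : ∀ u : V, (H.neighborSet u).ncard = d)
    (E' : Set (Sym2 V)) (hE' : E' ⊆ H.edgeSet)
    (v : E' → (Fin d → ZMod 2))
    (hind : ∀ u : V, LinearIndependent (ZMod 2)
      (fun e : {e : E' // (e : Sym2 V) ∈ H.incidenceSet u} => v e.1)) :
    ∃ w : H.edgeSet → (Fin d → ZMod 2),
      (∀ e : E', w ⟨e, hE' e.2⟩ = v e) ∧
      ∀ u : V,
        LinearIndependent (ZMod 2)
          (fun e : {e : H.edgeSet // (e : Sym2 V) ∈ H.incidenceSet u} => w e.1) ∧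
        Submodule.span (ZMod 2)
          (w '' {e : H.edgeSet | (e : Sym2 V) ∈ H.incidenceSet u}) = ⊤ := by
  classical
  set w₀ : Sym2 V → Fin d → ZMod 2 := Function.extend Subtype.val v 0
  have hw₀ : w₀ ∘ Subtype.val = v := funext (Subtype.val_injective.extend_apply v 0)
  have hdeg : ∀ u, (H.incidenceSet u).ncard = finrank (ZMod 2) (Fin d → ZMod 2) := by
    simp [ncard_incidenceSet, hreg]
  obtain ⟨w', hw'E', hw'⟩ := H.exists_extension_linearIndepOn_incidenceSet (hdeg · |>.le)
    E' w₀ fun u => linearIndepOn_comp_val_iff.mp (hw₀ ▸ hind u)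
  have hinc : ∀ u, H.edgeSet ∩ H.incidenceSet u = H.incidenceSet u := fun u =>
    inter_eq_right.mpr (H.incidenceSet_subset u)
  refine ⟨w' ∘ Subtype.val, fun e => (hw'E' e.2).trans (congrFun hw₀ e),
    fun u => ⟨?_, ?_⟩⟩
  · exact linearIndepOn_comp_val_iff.mpr (hinc u ▸ hw' u)
  · rw [image_comp, ← preimage_ofPred_eq, Subtype.image_preimage_coe, ofPred_mem_eq, hinc]
    exact Submodule.eq_top_of_finrank_eq
      (((hw' u).finrank_span_image_eq_ncard (toFinite _)).trans (hdeg u))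
end

section
/- For every even positive integer k and every integer d ≥ k, any d-regular graph contains a spanning subgraph in which every vertex has degree either k or k − 1. -/
/-!
Let `G` have all degrees in `{m, m - 1}` with `m > 0`. The vertices of degree `m` satisfy Hall's
condition in `G` (double counting, as no vertex has degree above `m`), so each of them can be
sent injectively to a neighbour. Deleting these edges costs every vertex at most one edge as a
tail and at most one as a head, and costs every vertex of degree `m` at least one, so the degrees
drop into `{m - 1, m - 2}`. Repeating this `d - k` times takes a `d`-regular graph down to degrees
in `{k, k - 1}`.
-/

open SimpleGraph

theorem Set.ncard_preimage_singleton_le_one {α β : Type*} {f : α → β} (hf : f.Injective) (b : β) :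
    (f ⁻¹' {b}).ncard ≤ 1 :=
  have hsub := Set.subsingleton_singleton.preimage hf
  have := hsub.finite.to_subtype
  Set.ncard_le_one_iff_subsingleton.mpr hsub

namespace SimpleGraph

variable {V : Type*}

def IsAlmostRegularOfDegree (G : SimpleGraph V) (m : ℕ) : Prop :=
  ∀ v, (G.neighborSet v).ncard = m ∨ (G.neighborSet v).ncard = m - 1

theorem ncard_neighborSet_sdiff [Finite V] {G K : SimpleGraph V} (hK : K ≤ G) (v : V) :
    ((G \ K).neighborSet v).ncard = (G.neighborSet v).ncard - (K.neighborSet v).ncard := by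
  rw [neighborSet_sdiff]
  exact Set.ncard_sdiff fun w hw => hK hw

theorem ncard_neighborSet_fromRel_le {ι : Type*} [Finite ι] (g f : ι → V) (v : V) :
    ((fromRel fun x y => ∃ i, g i = x ∧ f i = y).neighborSet v).ncard ≤
      (g ⁻¹' {v}).ncard + (f ⁻¹' {v}).ncard := by
  have hsub : (fromRel fun x y => ∃ i, g i = x ∧ f i = y).neighborSet v ⊆
      f '' (g ⁻¹' {v}) ∪ g '' (f ⁻¹' {v}) := by
    rintro w ⟨-, ⟨i, hgi, hfi⟩ | ⟨i, hgi, hfi⟩⟩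
    · exact Or.inl ⟨i, hgi, hfi⟩
    · exact Or.inr ⟨i, hfi, hgi⟩
  calc _ ≤ (f '' (g ⁻¹' {v}) ∪ g '' (f ⁻¹' {v})).ncard :=
        Set.ncard_le_ncard hsub (((Set.toFinite _).image f).union ((Set.toFinite _).image g))
    _ ≤ (f '' (g ⁻¹' {v})).ncard + (g '' (f ⁻¹' {v})).ncard := Set.ncard_union_le _ _
    _ ≤ (g ⁻¹' {v}).ncard + (f ⁻¹' {v}).ncard := add_le_add Set.ncard_image_le Set.ncard_image_le

theorem exists_injective_adj_of_ncard_neighborSet [Finite V] (G : SimpleGraph V) {m : ℕ}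
    (hm : 0 < m) (S : Set V) (hS : ∀ v ∈ S, m ≤ (G.neighborSet v).ncard)
    (hle : ∀ v, (G.neighborSet v).ncard ≤ m) :
    ∃ f : S → V, f.Injective ∧ ∀ a : S, G.Adj a (f a) := by
  classical
  have := Fintype.ofFinite V
  let t : S → Finset V := fun a => (G.neighborSet a).toFinset
  suffices hall : ∀ A : Finset S, A.card ≤ (A.biUnion t).card by
    obtain ⟨f, hf, hft⟩ := (Finset.all_card_le_biUnion_card_iff_exists_injective t).1 hall
    exact ⟨f, hf, fun a => by simpa [t] using hft a⟩
  intro A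
  refine Nat.le_of_mul_le_mul_right (Finset.card_mul_le_card_mul (fun (a : S) b => G.Adj a b)
    (fun a ha => ?_) (fun b _ => ?_)) hm
  · calc m ≤ (t a).card := by simpa [t, Set.ncard_eq_toFinset_card'] using hS a a.2
      _ ≤ _ := Finset.card_le_card fun w hw => Finset.mem_filter.2
          ⟨Finset.mem_biUnion.2 ⟨a, ha, hw⟩, by simpa [t] using hw⟩
  · calc _ ≤ (G.neighborSet b).ncard := by
          rw [Set.ncard_eq_toFinset_card']
          refine Finset.card_le_card_of_injOn Subtype.val (fun a ha => ?_)
            Subtype.val_injective.injOn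
          simpa using (Finset.mem_filter.1 ha).2.symm
      _ ≤ m := hle b

theorem IsAlmostRegularOfDegree.exists_le_pred [Finite V] {G : SimpleGraph V} {m : ℕ}
    (h : G.IsAlmostRegularOfDegree m) (hm : 0 < m) :
    ∃ G' ≤ G, G'.IsAlmostRegularOfDegree (m - 1) := by
  set S : Set V := {v | (G.neighborSet v).ncard = m}
  obtain ⟨f, hf, hadj⟩ := G.exists_injective_adj_of_ncard_neighborSet hm S
    (fun v hv => hv.ge) (fun v => by rcases h v with h | h <;> omega)
  set K := fromRel fun x y => ∃ a : S, (a : V) = x ∧ f a = y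
  have hK : K ≤ G := by
    rintro x y ⟨-, ⟨a, rfl, rfl⟩ | ⟨a, rfl, rfl⟩⟩
    exacts [hadj a, (hadj a).symm]
  refine ⟨G \ K, sdiff_le, fun v => ?_⟩
  rw [ncard_neighborSet_sdiff hK]
  have hKv : (K.neighborSet v).ncard ≤ (Subtype.val ⁻¹' {v} : Set S).ncard + (f ⁻¹' {v}).ncard :=
    ncard_neighborSet_fromRel_le _ _ v
  have hf1 := Set.ncard_preimage_singleton_le_one hf v
  by_cases hv : v ∈ S
  · have hval := Set.ncard_preimage_singleton_le_one (Subtype.val_injective (p := (· ∈ S))) v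
    have hpos : 0 < (K.neighborSet v).ncard :=
      (Set.ncard_pos).2 ⟨f ⟨v, hv⟩, (hadj ⟨v, hv⟩).ne, Or.inl ⟨⟨v, hv⟩, rfl, rfl⟩⟩
    have hvm : (G.neighborSet v).ncard = m := hv
    omega
  · have hval : (Subtype.val ⁻¹' {v} : Set S).ncard = 0 := by
      rw [Set.eq_empty_of_forall_notMem (s := (Subtype.val ⁻¹' {v} : Set S))
        fun a ha => hv (Set.mem_singleton_iff.1 ha ▸ a.2), Set.ncard_empty]
    have hvm : (G.neighborSet v).ncard = m - 1 := (h v).resolve_left hv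
    omega

theorem IsAlmostRegularOfDegree.exists_le_of_le [Finite V] {G : SimpleGraph V} {k m : ℕ}
    (h : G.IsAlmostRegularOfDegree m) (hkm : k ≤ m) :
    ∃ G' ≤ G, G'.IsAlmostRegularOfDegree k := by
  induction m, hkm using Nat.le_induction generalizing G with
  | base => exact ⟨G, le_rfl, h⟩
  | succ m _ ih =>
    obtain ⟨G'', hG'', h''⟩ := h.exists_le_pred m.succ_pos
    obtain ⟨G', hG', h'⟩ := ih h''
    exact ⟨G', hG'.trans hG'', h'⟩

end SimpleGraph

theorem stmt4_general {V : Type*} [Fintype V] (H : SimpleGraph V) (d k : ℕ)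
    (hkd : k ≤ d)
    (hreg : ∀ v : V, (H.neighborSet v).ncard = d) :
    ∃ H' : SimpleGraph V, H' ≤ H ∧
      ∀ v : V, (H'.neighborSet v).ncard = k ∨ (H'.neighborSet v).ncard = k - 1 :=
  IsAlmostRegularOfDegree.exists_le_of_le (fun v => Or.inl (hreg v)) hkd

/-- **Lemma 2.3.** For every even positive `k` and every `d ≥ k`, any `d`-regular graph
contains a spanning subgraph in which every degree is either `k` or `k - 1`. -/
theorem stmt4 {V : Type*} [Fintype V] (H : SimpleGraph V) (d k : ℕ)
    (hke : Even k) (hkpos : 0 < k) (hkd : k ≤ d)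
    (hreg : ∀ v : V, (H.neighborSet v).ncard = d) :
    ∃ H' : SimpleGraph V, H' ≤ H ∧
      ∀ v : V, (H'.neighborSet v).ncard = k ∨ (H'.neighborSet v).ncard = k - 1 :=
  stmt4_general H d k hkd hreg
end

section
/- Let H = (V, E) be a graph and let E_1, E_2, …, E_s be sets of edges of H, each of cardinality at most t. Suppose that for every 1 ≤ i < j ≤ s, deleting the edges of E_i ∪ E_j from H leaves a disconnected graph. If s > (2^t + 1)·2^{t−1}, then m(H) ≤ 2^t. -/
open SimpleGraph

/-!
Take `2 ^ t + 1` members of a connectivity code. The symmetric difference of two of them is a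
connected subgraph of `H`, so it cannot avoid `E i ∪ E j` for any `i < j`: each of the
`(2 ^ t + 1).choose 2 ≤ (2 ^ t + 1) 2 ^ (t - 1) < s` pairs avoids at most one `E i`. Hence some
`E i` meets every pairwise symmetric difference, i.e. `G ↦ G.edgeSet ∩ E i` is injective on
these members, which is impossible as `E i` has at most `2 ^ t` subsets.
-/

open scoped symmDiff

theorem SimpleGraph.Connected.not_disjoint_edgeSet_of_le {V : Type*} {G H : SimpleGraph V}
    {F : Set (Sym2 V)} (hG : G.Connected) (hGH : G ≤ H) (hF : ¬(H.deleteEdges F).Connected) :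
    ¬Disjoint G.edgeSet F := fun hdisj =>
  hF <| hG.mono fun _ _ hxy => (deleteEdges_adj ..).mpr ⟨hGH hxy, hdisj.notMem_of_mem_left hxy⟩

theorem exists_forall_not_of_card_lt_choose_two {α ι : Type*} {A : Set α} (hA : A.Finite)
    (R : ι → α → α → Prop) (hsymm : ∀ i a b, R i a b → R i b a)
    (huniq : ∀ a ∈ A, ∀ b ∈ A, a ≠ b → ∀ i j, R i a b → R j a b → i = j)
    (hcard : A.ncard.choose 2 < Nat.card ι) :
    ∃ i, ∀ a ∈ A, ∀ b ∈ A, a ≠ b → ¬R i a b := by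
  by_contra! hbad
  choose a ha b hb hab hR using hbad
  have : Finite A := hA.to_subtype
  let pair : ι → {z : Sym2 A // ¬z.IsDiag} := fun i =>
    ⟨s(⟨a i, ha i⟩, ⟨b i, hb i⟩), by simpa using hab i⟩
  have hpair : pair.Injective := fun i j hij => by
    simp only [pair, Subtype.mk.injEq, Sym2.eq_iff] at hij
    refine huniq _ (ha i) _ (hb i) (hab i) i j (hR i) ?_
    rcases hij with ⟨hai, hbi⟩ | ⟨hai, hbi⟩
    · rw [hai, hbi]; exact hR j
    · rw [hai, hbi]; exact hsymm _ _ _ (hR j)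
  have := Nat.card_le_card_of_injective pair hpair
  rw [Sym2.natCard_subtype_not_diag, Nat.card_coe_set_eq] at this
  omega

theorem ncard_le_two_pow_of_not_disjoint_symmDiff {V : Type*} {𝒢 : Set (SimpleGraph V)}
    {F : Set (Sym2 V)} (hF : F.Finite)
    (h : ∀ G₁ ∈ 𝒢, ∀ G₂ ∈ 𝒢, G₁ ≠ G₂ → ¬Disjoint (G₁ ∆ G₂).edgeSet F) :
    𝒢.ncard ≤ 2 ^ F.ncard := by
  rw [← Set.ncard_powerset F hF]
  refine Set.ncard_le_ncard_of_injOn (fun G => G.edgeSet ∩ F) (fun G _ => Set.inter_subset_right)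
    (fun G₁ hG₁ G₂ hG₂ heq => ?_) hF.powerset
  by_contra hne
  refine h G₁ hG₁ G₂ hG₂ hne (Set.disjoint_left.mpr fun e he heF => ?_)
  have := congrArg (e ∈ ·) heq
  simp only [symmDiff_def, edgeSet_sup, edgeSet_sdiff] at he
  simp only [Set.mem_inter_iff, heF, and_true, eq_iff_iff] at this
  rcases he with ⟨h₁, h₂⟩ | ⟨h₁, h₂⟩ <;> tauto

theorem two_pow_add_one_choose_two_le (t : ℕ) :
    (2 ^ t + 1).choose 2 ≤ (2 ^ t + 1) * 2 ^ (t - 1) := by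
  rw [Nat.choose_two_right, Nat.add_sub_cancel]
  refine Nat.div_le_of_le_mul ?_
  rcases t with _ | t
  · simp
  · rw [pow_succ, Nat.add_sub_cancel]
    exact le_of_eq (by ring)

namespace IsConnCode

variable {V : Type*} {H : SimpleGraph V} {𝒢 : Set (SimpleGraph V)}

theorem mono {𝒢' : Set (SimpleGraph V)} (h𝒢 : IsConnCode H 𝒢) (h : 𝒢' ⊆ 𝒢) :
    IsConnCode H 𝒢' :=
  ⟨fun G hG => h𝒢.1 G (h hG), fun G₁ hG₁ G₂ hG₂ => h𝒢.2 G₁ (h hG₁) G₂ (h hG₂)⟩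

theorem eq_of_disjoint_symmDiff_edgeSet {ι : Type*} [LinearOrder ι] (h𝒢 : IsConnCode H 𝒢)
    {E : ι → Set (Sym2 V)} (hdisc : ∀ i j, i < j → ¬(H.deleteEdges (E i ∪ E j)).Connected)
    {G₁ G₂ : SimpleGraph V} (hG₁ : G₁ ∈ 𝒢) (hG₂ : G₂ ∈ 𝒢) (hne : G₁ ≠ G₂) {i j : ι}
    (hi : Disjoint (G₁ ∆ G₂).edgeSet (E i)) (hj : Disjoint (G₁ ∆ G₂).edgeSet (E j)) : i = j := by
  have hconn := h𝒢.2 G₁ hG₁ G₂ hG₂ hne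
  have hle : G₁ ∆ G₂ ≤ H := symmDiff_le_sup.trans (sup_le (h𝒢.1 G₁ hG₁) (h𝒢.1 G₂ hG₂))
  rcases lt_trichotomy i j with hij | rfl | hij
  · exact absurd (Set.disjoint_union_right.mpr ⟨hi, hj⟩)
      (hconn.not_disjoint_edgeSet_of_le hle (hdisc i j hij))
  · rfl
  · exact absurd (Set.disjoint_union_right.mpr ⟨hj, hi⟩)
      (hconn.not_disjoint_edgeSet_of_le hle (hdisc j i hij))

end IsConnCode

theorem stmt6_general {V : Type*} [Fintype V] (H : SimpleGraph V) (s t : ℕ)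
    (E : Fin s → Set (Sym2 V))
    (hcard : ∀ i, (E i).ncard ≤ t)
    (hdisc : ∀ i j : Fin s, i < j → ¬(H.deleteEdges (E i ∪ E j)).Connected)
    (hs : (2 ^ t + 1) * 2 ^ (t - 1) < s) :
    mCode H ≤ 2 ^ t := by
  refine csSup_le' ?_
  rintro _ ⟨𝒢, h𝒢, rfl⟩
  by_contra! hbig
  obtain ⟨𝒜, h𝒜𝒢, h𝒜card⟩ := Set.exists_subset_card_eq (Nat.succ_le_of_lt hbig)
  have h𝒜 := h𝒢.mono h𝒜𝒢
  obtain ⟨i, hi⟩ := exists_forall_not_of_card_lt_choose_two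
    (Set.finite_of_ncard_pos (h𝒜card ▸ Nat.succ_pos _))
    (fun i G₁ G₂ => Disjoint (G₁ ∆ G₂).edgeSet (E i))
    (fun i G₁ G₂ h => symmDiff_comm G₁ G₂ ▸ h)
    (fun _ hG₁ _ hG₂ hne _ _ => h𝒜.eq_of_disjoint_symmDiff_edgeSet hdisc hG₁ hG₂ hne)
    (by rw [h𝒜card, Nat.card_fin]; exact (two_pow_add_one_choose_two_le t).trans_lt hs)
  have h𝒜le := ncard_le_two_pow_of_not_disjoint_symmDiff (Set.toFinite (E i)) hi
  have hpow := Nat.pow_le_pow_right two_pos (hcard i)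
  omega

/-- **Lemma 3.1.** Let `E₁, …, E_s` be sets of at most `t` edges of `H` such that the removal
of `E_i ∪ E_j` disconnects `H` for all `i < j`. If `s > (2^t + 1) 2^(t-1)` then
`m(H) ≤ 2 ^ t`. -/
theorem stmt6 {V : Type*} [Fintype V] (H : SimpleGraph V) (s t : ℕ)
    (E : Fin s → Set (Sym2 V))
    (hsub : ∀ i, E i ⊆ H.edgeSet)
    (hcard : ∀ i, (E i).ncard ≤ t)
    (hdisc : ∀ i j : Fin s, i < j → ¬(H.deleteEdges (E i ∪ E j)).Connected)
    (hs : (2 ^ t + 1) * 2 ^ (t - 1) < s) :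
    mCode H ≤ 2 ^ t :=
  stmt6_general H s t E hcard hdisc hs
end

section
/- For every integer t ≥ 2 and every integer s > (2^t + 1)·2^{t−1}, the Cartesian product graph H_{t,s} = K_t × C_s of the complete graph on t vertices with the cycle on s vertices is (t+1)-regular, has edge-connectivity exactly t + 1, and satisfies m(H_{t,s}) ≤ 2^t. -/
/-!
An edge cut of `G □ H` restricts to edge cuts of the copies `G × {b}` and `{a} × H`, and these
pieces are pairwise edge-disjoint. If some copy of each factor is cut this gives at least
`λ(G) + λ(H)` edges; otherwise every copy of one factor is cut. For `K_t □ C_s`, with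
`λ(K_t) = t - 1` and `λ(C_s) = 2`, each count is at least `t + 1`, and the `t + 1` edges at a
vertex isolate it.

For the code bound, layer `i` consists of the `t` cycle edges between `K_t × {i}` and
`K_t × {i + 1}`, and removing any two layers disconnects the product. Among `2 ^ t + 1` members of
a code, some pair agrees on each layer; as there are fewer pairs, `(2 ^ t + 1) 2 ^ (t - 1)`, than
layers, one pair agrees on two layers, and its symmetric difference is disconnected.
-/

open SimpleGraph

lemma Nat.choose_two_two_pow_add_one {t : ℕ} (ht : 1 ≤ t) :
    (2 ^ t + 1).choose 2 = (2 ^ t + 1) * 2 ^ (t - 1) := by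
  obtain ⟨t, rfl⟩ : ∃ k, t = k + 1 := ⟨t - 1, by omega⟩
  rw [Nat.choose_two_right, Nat.add_sub_cancel, Nat.add_sub_cancel, pow_succ, ← mul_assoc,
    Nat.mul_div_cancel _ two_pos]

lemma Fin.exists_mem_add_one_notMem {n : ℕ} [NeZero n] {S : Set (Fin n)} (hS : S.Nonempty)
    (hSc : Sᶜ.Nonempty) : ∃ k ∈ S, k + 1 ∉ S := by
  obtain ⟨a, ha⟩ := hS
  obtain ⟨b, hb⟩ := hSc
  by_contra! hclosed
  have hiter : ∀ m : ℕ, a + Fin.ofNat n m ∈ S := by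
    intro m
    induction m with
    | zero => simpa using ha
    | succ m ih =>
      convert hclosed _ ih using 1
      rw [add_assoc]
      congr 1
      ext
      simp [Fin.val_add]
  exact hb (by simpa using hiter (b - a).val)

lemma Finset.exists_ne_map_eq_map_eq_of_card_lt {ι β γ : Type*} [Fintype ι] [Fintype β]
    [DecidableEq γ] (T : Finset γ) (f : ι → γ → β) (hβ : Fintype.card β < T.card)
    (hι : T.card.choose 2 < Fintype.card ι) :
    ∃ i j, i ≠ j ∧ ∃ x ∈ T, ∃ y ∈ T, x ≠ y ∧ f i x = f i y ∧ f j x = f j y := by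
  have hpair : ∀ i, ∃ P ∈ T.powersetCard 2, ∀ x ∈ P, ∀ y ∈ P, f i x = f i y := by
    intro i
    obtain ⟨x, hx, y, hy, hxy, h⟩ := Finset.exists_ne_map_eq_of_card_lt_of_maps_to
      (t := Finset.univ) (by simpa using hβ) (f := f i) (fun _ _ => Finset.mem_coe.mpr (mem_univ _))
    refine ⟨{x, y}, mem_powersetCard.mpr ⟨insert_subset hx (singleton_subset_iff.mpr hy),
      card_pair hxy⟩, ?_⟩
    simp [h]
  choose P hPT hP using hpair
  obtain ⟨i, -, j, -, hij, hPij⟩ := Finset.exists_ne_map_eq_of_card_lt_of_maps_to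
    (s := Finset.univ) (by simpa using hι) (fun i _ => Finset.mem_coe.mpr (hPT i))
  obtain ⟨x, y, hxy, hPi⟩ := card_eq_two.mp (mem_powersetCard.mp (hPT i)).2
  have hx : x ∈ P i := hPi ▸ mem_insert_self x {y}
  have hy : y ∈ P i := hPi ▸ mem_insert_of_mem (mem_singleton_self y)
  exact ⟨i, j, hij, x, (mem_powersetCard.mp (hPT i)).1 hx, y, (mem_powersetCard.mp (hPT i)).1 hy,
    hxy, hP i x hx y hy, hP j x (hPij ▸ hx) y (hPij ▸ hy)⟩

namespace SimpleGraph

variable {V α β : Type*}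

def CutsAtLeast (H : SimpleGraph V) (k : ℕ) : Prop :=
  ∀ W : Set V, W.Nonempty → Wᶜ.Nonempty → k ≤ (cutEdgeSet H W).ncard

lemma CutsAtLeast.mono {H : SimpleGraph V} {k l : ℕ} (h : CutsAtLeast H k) (hlk : l ≤ k) :
    CutsAtLeast H l :=
  fun W hW hWc => hlk.trans (h W hW hWc)

lemma exists_cutEdgeSet_subset_of_not_connected [Nonempty V] {H : SimpleGraph V}
    {F : Set (Sym2 V)} (h : ¬(H.deleteEdges F).Connected) :
    ∃ W : Set V, W.Nonempty ∧ Wᶜ.Nonempty ∧ cutEdgeSet H W ⊆ F := by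
  obtain ⟨u, v, huv⟩ : ∃ u v, ¬(H.deleteEdges F).Reachable u v := by
    by_contra! h'
    exact h ⟨h'⟩
  refine ⟨{x | (H.deleteEdges F).Reachable u x}, ⟨u, .rfl⟩, ⟨v, huv⟩, ?_⟩
  rintro _ ⟨he, x, hx, y, hy, rfl⟩
  by_contra hF
  exact hy (hx.trans (deleteEdges_adj.mpr ⟨he, hF⟩).reachable)

lemma not_connected_deleteEdges_incidenceSet (H : SimpleGraph V) {v w : V} (hvw : v ≠ w) :
    ¬(H.deleteEdges (H.incidenceSet v)).Connected := by
  intro h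
  obtain ⟨p⟩ := h.preconnected v w
  cases p with
  | nil => exact hvw rfl
  | cons hadj _ =>
    rw [deleteEdges_adj] at hadj
    exact hadj.2 ⟨hadj.1, Sym2.mem_mk_left _ _⟩

lemma ncard_incidenceSet_eq_ncard_neighborSet (H : SimpleGraph V) (v : V) :
    (H.incidenceSet v).ncard = (H.neighborSet v).ncard := by
  classical
  rw [← Nat.card_coe_set_eq, ← Nat.card_coe_set_eq,
    Nat.card_congr (H.incidenceSetEquivNeighborSet v)]

theorem edgeConn_eq_of_cutsAtLeast [Fintype V] [Nonempty V] {H : SimpleGraph V} {k : ℕ}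
    (hcut : CutsAtLeast H k) {F : Set (Sym2 V)} (hF : F ⊆ H.edgeSet) (hFk : F.ncard = k)
    (hdis : ¬(H.deleteEdges F).Connected) : edgeConn H = k := by
  refine le_antisymm (Nat.sInf_le ⟨F, hF, hFk, hdis⟩) (le_csInf ⟨k, F, hF, hFk, hdis⟩ ?_)
  rintro _ ⟨F', -, rfl, hdis'⟩
  obtain ⟨W, hW, hWc, hsub⟩ := exists_cutEdgeSet_subset_of_not_connected hdis'
  exact (hcut W hW hWc).trans (Set.ncard_le_ncard hsub (Set.toFinite F'))

lemma image_cutEdgeSet_subset {G : SimpleGraph α} {H : SimpleGraph β} (f : G →g H) (W : Set β) :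
    Sym2.map f '' cutEdgeSet G (f ⁻¹' W) ⊆ cutEdgeSet H W := by
  rintro _ ⟨_, ⟨he, x, hx, y, hy, rfl⟩, rfl⟩
  exact ⟨f.map_adj he, f x, hx, f y, hy, rfl⟩

lemma sum_ncard_cutEdgeSet_le_boxProd [Fintype α] [Fintype β] (G : SimpleGraph α)
    (H : SimpleGraph β) (W : Set (α × β)) :
    ∑ b, (cutEdgeSet G {a | (a, b) ∈ W}).ncard + ∑ a, (cutEdgeSet H {b | (a, b) ∈ W}).ncard ≤
      (cutEdgeSet (G □ H) W).ncard := by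
  set S : β ⊕ α → Set (Sym2 (α × β)) := Sum.elim
    (fun b => Sym2.map (G.boxProdLeft H b) '' cutEdgeSet G (G.boxProdLeft H b ⁻¹' W))
    (fun a => Sym2.map (G.boxProdRight H a) '' cutEdgeSet H (G.boxProdRight H a ⁻¹' W))
  -- an edge of a copy of `G` has distinct first and equal second coordinates, and vice versa
  have hdisj : Pairwise (Function.onFun Disjoint S) := by
    rintro (b | a) (b' | a') hne <;>
      refine Set.disjoint_left.mpr ?_ <;>
      rintro _ ⟨_, ⟨he, x, -, y, -, rfl⟩, rfl⟩ ⟨_, ⟨he', x', -, y', -, rfl⟩, h⟩ <;>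
      simp only [boxProdLeft_apply, boxProdRight_apply, Sym2.map_mk, Sym2.eq, Sym2.rel_iff',
        Prod.mk.injEq, Prod.swap_prod_mk, ne_eq, Sum.inl.injEq, Sum.inr.injEq, reduceCtorEq,
        not_false_eq_true] at h hne <;>
      grind [he.ne, he'.ne]
  have hsub : ⋃ i, S i ⊆ cutEdgeSet (G □ H) W := by
    refine Set.iUnion_subset ?_
    rintro (b | a)
    exacts [image_cutEdgeSet_subset (G.boxProdLeft H b).toHom W,
      image_cutEdgeSet_subset (G.boxProdRight H a).toHom W]
  calc _ = ∑ i, (S i).ncard := by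
        rw [Fintype.sum_sum_type]
        simp only [S, Sum.elim_inl, Sum.elim_inr,
          Set.ncard_image_of_injective _ (Sym2.map.injective (RelEmbedding.injective _))]
        rfl
    _ = (⋃ i, S i).ncard := by
        rw [Set.ncard_iUnion_of_finite (fun _ => Set.toFinite _) hdisj, finsum_eq_sum_of_fintype]
    _ ≤ _ := Set.ncard_le_ncard hsub (Set.toFinite _)

lemma ncard_mul_ncard_compl_le_ncard_cutEdgeSet_top [Finite α] (S : Set α) :
    S.ncard * Sᶜ.ncard ≤ (cutEdgeSet (⊤ : SimpleGraph α) S).ncard := by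
  rw [← Set.ncard_prod]
  refine Set.ncard_le_ncard_of_injOn (fun p => s(p.1, p.2)) ?_ ?_
  · rintro ⟨x, y⟩ ⟨hx, hy⟩
    exact ⟨by simpa using fun h : x = y => hy (h ▸ hx), x, hx, y, hy, rfl⟩
  · rintro ⟨x, y⟩ ⟨hx, hy⟩ ⟨x', y'⟩ ⟨hx', hy'⟩ h
    simp only [Sym2.eq_iff] at h
    grind

theorem cutsAtLeast_top [Fintype α] : CutsAtLeast (⊤ : SimpleGraph α) (Fintype.card α - 1) := by
  intro S hS hSc
  have hcard : S.ncard + Sᶜ.ncard = Fintype.card α := by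
    rw [Set.ncard_add_ncard_compl, Nat.card_eq_fintype_card]
  have := hS.ncard_pos
  have := hSc.ncard_pos
  calc Fintype.card α - 1 ≤ S.ncard * Sᶜ.ncard := by
        rw [Nat.sub_le_iff_le_add, ← hcard]
        nlinarith
    _ ≤ _ := ncard_mul_ncard_compl_le_ncard_cutEdgeSet_top S

lemma cycleGraph_adj_add_one {n : ℕ} (k : Fin (n + 2)) : (cycleGraph (n + 2)).Adj k (k + 1) :=
  cycleGraph_adj.mpr (.inr (add_sub_cancel_left k 1))

theorem cutsAtLeast_cycleGraph (n : ℕ) : CutsAtLeast (cycleGraph (n + 3)) 2 := by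
  intro S hS hSc
  obtain ⟨k, hk, hk'⟩ := Fin.exists_mem_add_one_notMem hS hSc
  obtain ⟨l, hl, hl'⟩ := Fin.exists_mem_add_one_notMem hSc (by rwa [compl_compl])
  rw [Set.notMem_compl_iff] at hl'
  have hne : s(k, k + 1) ≠ s(l + 1, l) := by
    intro h
    rw [Sym2.eq_iff] at h
    rcases h with ⟨rfl, h⟩ | ⟨rfl, -⟩
    · rw [add_assoc, add_eq_left] at h
      simp [Fin.ext_iff, Fin.val_add, Nat.mod_eq_of_lt (show 2 < n + 3 by omega)] at h
    · exact hl hk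
  calc 2 = ({s(k, k + 1), s(l + 1, l)} : Set _).ncard := (Set.ncard_pair hne).symm
    _ ≤ _ := by
      refine Set.ncard_le_ncard ?_ (Set.toFinite _)
      rintro _ (rfl | rfl)
      exacts [⟨cycleGraph_adj_add_one k, k, hk, k + 1, hk', rfl⟩,
        ⟨(cycleGraph_adj_add_one l).symm, l + 1, hl', l, hl, rfl⟩]

theorem CutsAtLeast.boxProd [Fintype α] [Fintype β] {G : SimpleGraph α} {H : SimpleGraph β}
    {k l : ℕ} (hG : CutsAtLeast G k) (hH : CutsAtLeast H l) :
    CutsAtLeast (G □ H) (min (k + l) (min (Fintype.card α * l) (Fintype.card β * k))) := by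
  rintro W ⟨⟨a₀, b₀⟩, h₀⟩ ⟨⟨a₁, b₁⟩, h₁⟩
  set col : β → Set α := fun b => {a | (a, b) ∈ W}
  set row : α → Set β := fun a => {b | (a, b) ∈ W}
  have hsum : ∑ b, (cutEdgeSet G (col b)).ncard + ∑ a, (cutEdgeSet H (row a)).ncard ≤
      (cutEdgeSet (G □ H) W).ncard :=
    sum_ncard_cutEdgeSet_le_boxProd G H W
  by_cases hrow : ∃ a, (row a).Nonempty ∧ (row a)ᶜ.Nonempty
  · obtain ⟨a, ⟨b, hb⟩, ⟨b', hb'⟩⟩ := hrow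
    by_cases hcol : ∃ b, (col b).Nonempty ∧ (col b)ᶜ.Nonempty
    · obtain ⟨b'', hc, hc'⟩ := hcol
      have hk := (hG _ hc hc').trans <| Finset.single_le_sum (fun _ _ => Nat.zero_le _)
        (Finset.mem_univ b'') (f := fun b => (cutEdgeSet G (col b)).ncard)
      have hl := (hH _ ⟨b, hb⟩ ⟨b', hb'⟩).trans <| Finset.single_le_sum (fun _ _ => Nat.zero_le _)
        (Finset.mem_univ a) (f := fun a => (cutEdgeSet H (row a)).ncard)
      exact min_le_of_left_le (by omega)
    · -- every column is empty or full, so every row meets `b` and misses `b'`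
      have hrows : ∀ a', l ≤ (cutEdgeSet H (row a')).ncard := fun a' =>
        hH _ ⟨b, by_contra fun h => hcol ⟨b, ⟨a, hb⟩, ⟨a', h⟩⟩⟩
          ⟨b', fun h => hcol ⟨b', ⟨a', h⟩, ⟨a, hb'⟩⟩⟩
      have := Finset.card_nsmul_le_sum Finset.univ _ l fun a' _ => hrows a'
      rw [smul_eq_mul, Finset.card_univ] at this
      exact min_le_of_right_le (min_le_of_left_le (by omega))
  · have hcols : ∀ b, k ≤ (cutEdgeSet G (col b)).ncard := fun b =>
      hG _ ⟨a₀, by_contra fun h => hrow ⟨a₀, ⟨b₀, h₀⟩, ⟨b, h⟩⟩⟩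
        ⟨a₁, fun h => hrow ⟨a₁, ⟨b, h⟩, ⟨b₁, h₁⟩⟩⟩
    have := Finset.card_nsmul_le_sum Finset.univ _ k fun b _ => hcols b
    rw [smul_eq_mul, Finset.card_univ] at this
    exact min_le_of_right_le (min_le_of_right_le (by omega))

lemma eq_add_one_or_of_cycleGraph_adj {n : ℕ} [NeZero n] {k l : Fin n}
    (h : (cycleGraph n).Adj k l) : k = l + 1 ∨ l = k + 1 := by
  rcases n with _ | _ | n
  · exact k.elim0
  · exact (cycleGraph_one_adj h).elim
  · rw [cycleGraph_adj, sub_eq_iff_eq_add, sub_eq_iff_eq_add, add_comm 1 l, add_comm 1 k] at h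
    exact h

lemma eq_of_cycleGraph_adj_of_mem_Ioc_of_notMem {n : ℕ} [NeZero n] {i j k l : Fin n} (hij : i < j)
    (hadj : (cycleGraph n).Adj k l) (hk : k ∈ Set.Ioc i j) (hl : l ∉ Set.Ioc i j) :
    (k = i + 1 ∧ l = i) ∨ (k = j ∧ l = j + 1) := by
  obtain ⟨m, rfl⟩ : ∃ m, n = m + 1 := ⟨n - 1, (Nat.sub_one_add_one (NeZero.ne n)).symm⟩
  rcases eq_add_one_or_of_cycleGraph_adj hadj with rfl | rfl <;>
    simp only [Set.mem_Ioc, Fin.lt_def, Fin.le_def, Fin.ext_iff, Fin.val_add_one,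
      Fin.val_last] at * <;>
    split_ifs at * <;> omega

theorem not_connected_of_le_boxProd_cycleGraph [Nonempty α] {G : SimpleGraph α} {n : ℕ}
    [NeZero n] {D : SimpleGraph (α × Fin n)} (hD : D ≤ G □ cycleGraph n) {i j : Fin n}
    (hij : i < j) (hi : ∀ a, ¬D.Adj (a, i) (a, i + 1)) (hj : ∀ a, ¬D.Adj (a, j) (a, j + 1)) :
    ¬D.Connected := by
  intro hconn
  obtain ⟨a₀⟩ := ‹Nonempty α›
  obtain ⟨p⟩ := hconn.preconnected (a₀, j) (a₀, i)
  obtain ⟨⟨⟨⟨a, k⟩, ⟨b, l⟩⟩, hadj⟩, -, hk, hl⟩ :=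
    p.exists_boundary_dart {x | x.2 ∈ Set.Ioc i j} ⟨hij, le_rfl⟩ (by simp)
  dsimp only at hadj hk hl
  rcases boxProd_adj.mp (hD hadj) with ⟨-, hkl⟩ | ⟨hkl, hab⟩ <;> dsimp only at hkl
  · subst hkl
    exact hl hk
  · subst hab
    rcases eq_of_cycleGraph_adj_of_mem_Ioc_of_notMem hij hkl hk hl with ⟨rfl, rfl⟩ | ⟨rfl, rfl⟩
    exacts [hi a hadj.symm, hj a hadj]

lemma ncard_neighborSet_top_boxProd_cycleGraph {t n : ℕ} (v : Fin t × Fin (n + 3)) :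
    (((⊤ : SimpleGraph (Fin t)) □ cycleGraph (n + 3)).neighborSet v).ncard = t + 1 := by
  rw [← Nat.card_coe_set_eq, Nat.card_eq_fintype_card, card_neighborSet_eq_degree,
    degree_boxProd, complete_graph_degree, Fintype.card_fin, cycleGraph_degree_three_le]
  have := v.1.pos
  omega

lemma cutsAtLeast_top_boxProd_cycleGraph {t : ℕ} (ht : 2 ≤ t) (n : ℕ) :
    CutsAtLeast ((⊤ : SimpleGraph (Fin t)) □ cycleGraph (n + 3)) (t + 1) := by
  refine (cutsAtLeast_top.boxProd (cutsAtLeast_cycleGraph n)).mono ?_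
  have : 3 * (t - 1) ≤ (n + 3) * (t - 1) := Nat.mul_le_mul_right _ (by omega)
  simp only [Fintype.card_fin]
  omega

theorem edgeConn_top_boxProd_cycleGraph {t : ℕ} (ht : 2 ≤ t) (n : ℕ) :
    edgeConn ((⊤ : SimpleGraph (Fin t)) □ cycleGraph (n + 3)) = t + 1 := by
  let v : Fin t × Fin (n + 3) := (⟨0, by omega⟩, 0)
  have : Nonempty (Fin t × Fin (n + 3)) := ⟨v⟩
  refine edgeConn_eq_of_cutsAtLeast (cutsAtLeast_top_boxProd_cycleGraph ht n)
    (incidenceSet_subset _ v) ?_ (not_connected_deleteEdges_incidenceSet _ (w := (v.1, 1)) ?_)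
  · rw [ncard_incidenceSet_eq_ncard_neighborSet, ncard_neighborSet_top_boxProd_cycleGraph]
  · simp [v]

end SimpleGraph

theorem mCode_le_of_separating_layers {V ι κ : Type*} [Fintype V] [Fintype ι] [Fintype κ]
    (H : SimpleGraph V) (u v : ι → κ → V)
    (hι : (2 ^ Fintype.card κ + 1).choose 2 < Fintype.card ι)
    (hsep : ∀ i j, i ≠ j → ∀ D ≤ H, (∀ a, ¬D.Adj (u i a) (v i a)) →
      (∀ a, ¬D.Adj (u j a) (v j a)) → ¬D.Connected) :
    mCode H ≤ 2 ^ Fintype.card κ := by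
  classical
  refine csSup_le' ?_
  rintro _ ⟨𝒢, ⟨hle, hconn⟩, rfl⟩
  by_contra! hbig
  obtain ⟨T, hT𝒢, hT⟩ := Set.exists_subset_card_eq (n := 2 ^ Fintype.card κ + 1) hbig
  lift T to Finset (SimpleGraph V) using Set.finite_of_ncard_pos (hT ▸ Nat.succ_pos _)
  rw [Set.ncard_coe_finset] at hT
  obtain ⟨i, j, hij, G, hG, G', hG', hne, hi, hj⟩ := T.exists_ne_map_eq_map_eq_of_card_lt
    (fun i G a => G.Adj (u i a) (v i a)) (by simp [hT, Fintype.card_prop]) (by rwa [hT])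
  refine hsep i j hij _ (symmDiff_le_sup.trans (sup_le (hle G (hT𝒢 hG)) (hle G' (hT𝒢 hG'))))
    ?_ ?_ (hconn G (hT𝒢 hG) G' (hT𝒢 hG') hne) <;>
  · intro a
    simp [symmDiff_def, congrFun hi a, congrFun hj a]

theorem mCode_top_boxProd_cycleGraph_le {t n : ℕ} (ht : 1 ≤ t)
    (hn : (2 ^ t + 1) * 2 ^ (t - 1) < n) :
    mCode ((⊤ : SimpleGraph (Fin t)) □ cycleGraph n) ≤ 2 ^ t := by
  have : NeZero n := ⟨by omega⟩
  have : Nonempty (Fin t) := ⟨⟨0, ht⟩⟩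
  simpa using mCode_le_of_separating_layers ((⊤ : SimpleGraph (Fin t)) □ cycleGraph n)
    (fun (i : Fin n) (a : Fin t) => (a, i)) (fun i a => (a, i + 1))
    (by simpa [Nat.choose_two_two_pow_add_one ht] using hn) fun i j hij D hD hi hj =>
      hij.lt_or_gt.elim (not_connected_of_le_boxProd_cycleGraph hD · hi hj)
        (not_connected_of_le_boxProd_cycleGraph hD · hj hi)

/-- **Proposition 3.2.** For `s > (2^t + 1) 2^(t-1)`, the Cartesian product `K_t × C_s` is
`(t+1)`-regular, has edge-connectivity exactly `t + 1`, and satisfies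
`m(K_t × C_s) ≤ 2 ^ t`. -/
theorem stmt7 (t s : ℕ) (ht : 2 ≤ t) (hs : (2 ^ t + 1) * 2 ^ (t - 1) < s) :
    (∀ v : Fin t × Fin s,
      (((⊤ : SimpleGraph (Fin t)) □ cycleGraph s).neighborSet v).ncard = t + 1) ∧
    edgeConn ((⊤ : SimpleGraph (Fin t)) □ cycleGraph s) = t + 1 ∧
    mCode ((⊤ : SimpleGraph (Fin t)) □ cycleGraph s) ≤ 2 ^ t := by
  have : 2 ≤ (2 ^ t + 1) * 2 ^ (t - 1) :=
    le_mul_of_le_of_one_le (by have := Nat.one_le_two_pow (n := t); omega) Nat.one_le_two_pow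
  obtain ⟨n, rfl⟩ : ∃ n, s = n + 3 := ⟨s - 3, by omega⟩
  exact ⟨ncard_neighborSet_top_boxProd_cycleGraph, edgeConn_top_boxProd_cycleGraph ht n,
    mCode_top_boxProd_cycleGraph_le (by omega) hs⟩
end

section
/- For every integer s > 36, the torus C_3 × C_s (the Cartesian product of a cycle of length 3 with a cycle of length s) satisfies m(C_3 × C_s) ≤ 8. -/
open SimpleGraph

/-!
Let `𝒢` be a connectivity code for `H □ C_n`. The symmetric difference of two members of `𝒢`
is connected, so it uses an edge of every column boundary except at most one: avoiding two
boundaries `j < k` cuts off the columns in `(j, k]`. Hence if `𝒢` had `2 ^ |V(H)| + 1` members and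
`n` exceeded their number of pairs, some boundary `j` would be crossed by every pairwise
difference; then the members of `𝒢` would be determined by their edges at `j`, which admit only
`2 ^ |V(H)|` patterns. For `H = C₃` this means `9` members, `36` pairs and `s ≥ 37` boundaries.
-/

namespace SimpleGraph

lemma cycleGraph_adj_iff_eq_add_one {n : ℕ} {u v : Fin (n + 2)} :
    (cycleGraph (n + 2)).Adj u v ↔ u = v + 1 ∨ v = u + 1 := by
  rw [cycleGraph_adj, sub_eq_iff_eq_add, sub_eq_iff_eq_add, add_comm 1 v, add_comm 1 u]

lemma symmDiff_adj {V : Type*} {G₁ G₂ : SimpleGraph V} {v w : V} :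
    (symmDiff G₁ G₂).Adj v w ↔ ¬(G₁.Adj v w ↔ G₂.Adj v w) := by
  rw [symmDiff_def, sup_adj, sdiff_adj, sdiff_adj]
  tauto

end SimpleGraph

lemma symmDiff_eq_of_pair_eq {β : Type*} [GeneralizedBooleanAlgebra β] [DecidableEq β]
    {a b c d : β} (h : ({a, b} : Finset β) = {c, d}) : symmDiff a b = symmDiff c d := by
  have h' : ({a, b} : Set β) = {c, d} := by
    simpa using congrArg ((↑) : Finset β → Set β) h
  rcases Set.pair_eq_pair_iff.mp h' with ⟨rfl, rfl⟩ | ⟨rfl, rfl⟩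
  · rfl
  · exact symmDiff_comm _ _

namespace Fin

variable {n : ℕ} {j k l : Fin (n + 2)}

lemma eq_right_of_mem_Ioc_of_add_one_notMem (hl : l ∈ Set.Ioc j k)
    (hl' : l + 1 ∉ Set.Ioc j k) : l = k := by
  rcases eq_or_ne l (Fin.last (n + 1)) with rfl | hlast
  · exact (Fin.last_le_iff.mp hl.2).symm
  have h := Fin.val_add_one_of_lt (Fin.lt_last_iff_ne_last.mpr hlast)
  simp only [Set.mem_Ioc, Fin.lt_def, Fin.le_def, h] at hl hl'
  ext; omega

lemma eq_left_of_notMem_Ioc_of_add_one_mem (hl : l ∉ Set.Ioc j k)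
    (hl' : l + 1 ∈ Set.Ioc j k) : l = j := by
  have hlast : l ≠ Fin.last (n + 1) := by
    rintro rfl
    simp at hl'
  have h := Fin.val_add_one_of_lt (Fin.lt_last_iff_ne_last.mpr hlast)
  simp only [Set.mem_Ioc, Fin.lt_def, Fin.le_def, h] at hl hl'
  ext; omega

end Fin

section Torus

variable {α : Type*} {n : ℕ}

def CrossesBoundary (G : SimpleGraph (α × Fin (n + 2))) (j : Fin (n + 2)) : Prop :=
  ∃ a, G.Adj (a, j) (a, j + 1)

-- The columns in `(j, k]` can only be left through the boundaries `j` and `k`.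
lemma not_connected_of_lt_of_not_crossesBoundary {H : SimpleGraph α}
    {G : SimpleGraph (α × Fin (n + 2))} (hG : G ≤ H □ cycleGraph (n + 2))
    {j k : Fin (n + 2)} (hjk : j < k) (hj : ¬CrossesBoundary G j)
    (hk : ¬CrossesBoundary G k) : ¬G.Connected := by
  intro hc
  obtain ⟨a, -⟩ := hc.nonempty.some
  obtain ⟨⟨⟨⟨a₁, l₁⟩, ⟨a₂, l₂⟩⟩, hadj⟩, -, h₁, h₂⟩ :=
    (hc.preconnected (a, k) (a, j)).some.exists_boundary_dart {p | p.2 ∈ Set.Ioc j k}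
      ⟨hjk, le_rfl⟩ (by simp)
  change G.Adj (a₁, l₁) (a₂, l₂) at hadj
  change l₁ ∈ Set.Ioc j k at h₁
  change l₂ ∉ Set.Ioc j k at h₂
  rcases boxProd_adj.mp (hG hadj) with ⟨-, hl⟩ | ⟨hcyc, ha⟩
  · exact h₂ ((show l₁ = l₂ from hl) ▸ h₁)
  · obtain rfl : a₁ = a₂ := ha
    rcases cycleGraph_adj_iff_eq_add_one.mp hcyc with rfl | rfl
    · obtain rfl := Fin.eq_left_of_notMem_Ioc_of_add_one_mem h₂ h₁
      exact hj ⟨a₁, hadj.symm⟩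
    · obtain rfl := Fin.eq_right_of_mem_Ioc_of_add_one_notMem h₁ h₂
      exact hk ⟨a₁, hadj⟩

lemma not_connected_of_ne_of_not_crossesBoundary {H : SimpleGraph α}
    {G : SimpleGraph (α × Fin (n + 2))} (hG : G ≤ H □ cycleGraph (n + 2))
    {j k : Fin (n + 2)} (hjk : j ≠ k) (hj : ¬CrossesBoundary G j)
    (hk : ¬CrossesBoundary G k) : ¬G.Connected := by
  rcases hjk.lt_or_gt with h | h
  · exact not_connected_of_lt_of_not_crossesBoundary hG h hj hk
  · exact not_connected_of_lt_of_not_crossesBoundary hG h hk hj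

lemma exists_forall_crossesBoundary_symmDiff {H : SimpleGraph α}
    {T : Finset (SimpleGraph (α × Fin (n + 2)))} (hT : ∀ G ∈ T, G ≤ H □ cycleGraph (n + 2))
    (hconn : ∀ G₁ ∈ T, ∀ G₂ ∈ T, G₁ ≠ G₂ → (symmDiff G₁ G₂).Connected)
    (hcard : T.card.choose 2 < n + 2) :
    ∃ j, ∀ G₁ ∈ T, ∀ G₂ ∈ T, G₁ ≠ G₂ → CrossesBoundary (symmDiff G₁ G₂) j := by
  classical
  by_contra! hbad
  choose g₁ hg₁ g₂ hg₂ hne hcross using hbad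
  -- more boundaries than pairs, so one pair avoids two boundaries
  obtain ⟨j, -, k, -, hjk, hpair⟩ := Finset.exists_ne_map_eq_of_card_lt_of_maps_to
    (s := Finset.univ) (t := T.powersetCard 2) (f := fun j => {g₁ j, g₂ j})
    (by simpa using hcard) fun j _ => Finset.mem_powersetCard.mpr
      ⟨Finset.insert_subset (hg₁ j) (Finset.singleton_subset_iff.mpr (hg₂ j)),
        Finset.card_pair (hne j)⟩
  have hsymm : symmDiff (g₁ k) (g₂ k) = symmDiff (g₁ j) (g₂ j) :=
    symmDiff_eq_of_pair_eq hpair.symm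
  exact not_connected_of_ne_of_not_crossesBoundary
    (symmDiff_le_sup.trans (sup_le (hT _ (hg₁ j)) (hT _ (hg₂ j)))) hjk (hcross j)
    (hsymm ▸ hcross k) (hconn _ (hg₁ j) _ (hg₂ j) (hne j))

lemma card_le_two_pow_of_forall_crossesBoundary_symmDiff [Fintype α]
    {T : Finset (SimpleGraph (α × Fin (n + 2)))} {j : Fin (n + 2)}
    (hT : ∀ G₁ ∈ T, ∀ G₂ ∈ T, G₁ ≠ G₂ → CrossesBoundary (symmDiff G₁ G₂) j) :
    T.card ≤ 2 ^ Fintype.card α := by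
  classical
  have hinj : Set.InjOn (fun (G : SimpleGraph (α × Fin (n + 2))) a => G.Adj (a, j) (a, j + 1))
      T := by
    intro G₁ h₁ G₂ h₂ heq
    by_contra hne
    obtain ⟨a, ha⟩ := hT G₁ h₁ G₂ h₂ hne
    exact symmDiff_adj.mp ha (iff_of_eq (congrFun heq a))
  calc T.card ≤ (Finset.univ : Finset (α → Prop)).card :=
        Finset.card_le_card_of_injOn _ (fun _ _ => Finset.mem_coe.mpr (Finset.mem_univ _)) hinj
    _ = 2 ^ Fintype.card α := by simp [Fintype.card_prop]

lemma IsConnCode.ncard_le_two_pow_s8 [Fintype α] {H : SimpleGraph α}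
    {𝒢 : Set (SimpleGraph (α × Fin (n + 2)))} (h𝒢 : IsConnCode (H □ cycleGraph (n + 2)) 𝒢)
    (hn : (2 ^ Fintype.card α + 1).choose 2 < n + 2) : 𝒢.ncard ≤ 2 ^ Fintype.card α := by
  by_contra! hlt
  lift 𝒢 to Finset (SimpleGraph (α × Fin (n + 2)))
    using Set.finite_of_ncard_pos ((Nat.zero_le _).trans_lt hlt)
  rw [Set.ncard_coe_finset] at hlt
  obtain ⟨T, hT𝒢, hTcard⟩ := Finset.exists_subset_card_eq hlt
  obtain ⟨j, hj⟩ := exists_forall_crossesBoundary_symmDiff (fun G hG => h𝒢.1 G (hT𝒢 hG))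
    (fun G₁ h₁ G₂ h₂ => h𝒢.2 G₁ (hT𝒢 h₁) G₂ (hT𝒢 h₂)) (hTcard ▸ hn)
  have := card_le_two_pow_of_forall_crossesBoundary_symmDiff hj
  omega

end Torus

theorem mCode_boxProd_cycleGraph_le {α : Type*} [Fintype α] (H : SimpleGraph α) {n : ℕ}
    (hn : (2 ^ Fintype.card α + 1).choose 2 < n) :
    mCode (H □ cycleGraph n) ≤ 2 ^ Fintype.card α := by
  obtain ⟨n, rfl⟩ : ∃ m, n = m + 2 := by
    have : 0 < (2 ^ Fintype.card α + 1).choose 2 :=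
      Nat.choose_pos (Nat.succ_le_succ Nat.one_le_two_pow)
    exact ⟨n - 2, by omega⟩
  exact csSup_le' fun _ ⟨𝒢, h𝒢, hcard⟩ => hcard ▸ h𝒢.ncard_le_two_pow_s8 hn

/-- For every `s > 36`, the torus `C₃ × C_s` satisfies `m(C₃ × C_s) ≤ 8`. -/
theorem stmt8 (s : ℕ) (hs : 36 < s) :
    mCode (cycleGraph 3 □ cycleGraph s) ≤ 8 :=
  mCode_boxProd_cycleGraph_le (cycleGraph 3) (by simpa [Nat.choose] using hs)
end

section
/- Let k ≥ 1 and let s be an integer with s > 2^{k−1}(2^k + 1). Let H = H(s,k) be a graph obtained from the vertex-disjoint union of s cliques K(0), K(1), …, K(s−1), each on 2k+1 vertices, by adding for each 0 ≤ i ≤ s−1 a matching M_i of k edges between K(i) and K(i+1) (indices modulo s). Then the edge-connectivity of H is exactly 2k, and m(H) = 2^k. -/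
open SimpleGraph

/-- The graph `H(s, k)`: the disjoint union of `s` cliques `K(0), …, K(s-1)`, each on
`2k + 1` vertices, together with, for each `i`, a matching `M_i` of `k` edges between `K(i)`
and `K(i+1)` (indices mod `s`); the matching `M_i` joins the vertex `a i m` of `K(i)` to the
vertex `b i m` of `K(i+1)`, for `m = 0, …, k-1`. -/
def cliqueRing (s k : ℕ) (a b : Fin s → Fin k → Fin (2 * k + 1)) :
    SimpleGraph (Fin s × Fin (2 * k + 1)) :=
  SimpleGraph.fromRel (fun p q =>
    (p.1 = q.1 ∧ p.2 ≠ q.2) ∨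
    ((q.1 : ℕ) = ((p.1 : ℕ) + 1) % s ∧ ∃ m : Fin k, p.2 = a p.1 m ∧ q.2 = b p.1 m))

/-!
Fewer than `2k` deleted edges cannot separate two vertices of a clique `K_{2k+1}` (they are
joined by `2k` edge-disjoint paths of length at most two), nor delete two whole matchings, so the
ring of cliques stays connected; deleting two matchings disconnects it.

The edges of `K_{2k+1}` contain `k` edge-disjoint spanning double stars. Adding the `j`-th edge
of every matching to the `j`-th double star in every clique gives `k` edge-disjoint connected
layers, and the unions of layers over the subsets of `{0, …, k-1}` form a code of size `2^k`,
because the symmetric difference of two such unions is the union over the symmetric difference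
of the index sets. Conversely, a subgraph meets `M_i` in one of `2^k` traces, so among `2^k + 1`
members of a code some two have the same trace on `M_i`, for every `i`; no pair can agree on two
matchings, since then their symmetric difference misses two links of the ring. Hence
`s ≤ (2^k + 1).choose 2 = 2^(k-1) (2^k + 1)`.
-/

open Function

theorem Finset.sup_sdiff_sup_of_pairwise_disjoint {α ι : Type*} [GeneralizedBooleanAlgebra α]
    [DecidableEq ι] {f : ι → α} (hf : Pairwise (Disjoint on f)) (S T : Finset ι) :
    S.sup f \ T.sup f = (S \ T).sup f := by
  have hterm : ∀ i, f i \ T.sup f = if i ∈ T then ⊥ else f i := by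
    intro i
    split_ifs with hi
    · exact sdiff_eq_bot_iff.2 (Finset.le_sup hi)
    · exact (Finset.disjoint_sup_right.2 fun j hj =>
        hf (ne_of_mem_of_not_mem hj hi).symm).sdiff_eq_left
  rw [← Finset.sup_sdiff_right]
  simp only [hterm, Finset.sup_ite, Finset.sup_bot, bot_sup_eq, Finset.sdiff_eq_filter]

theorem Finset.sup_symmDiff_sup_of_pairwise_disjoint {α ι : Type*} [GeneralizedBooleanAlgebra α]
    [DecidableEq ι] {f : ι → α} (hf : Pairwise (Disjoint on f)) (S T : Finset ι) :
    symmDiff (S.sup f) (T.sup f) = (symmDiff S T).sup f := by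
  rw [symmDiff_def, symmDiff_def, Finset.sup_eq_union, Finset.sup_union,
    sup_sdiff_sup_of_pairwise_disjoint hf, sup_sdiff_sup_of_pairwise_disjoint hf]

theorem card_le_choose_two_of_no_double_agreement {ι α β : Type*} [Fintype ι] [Fintype β]
    [DecidableEq α] (A : Finset α) (σ : ι → α → β) (hA : Fintype.card β < A.card)
    (hσ : ∀ i i', i ≠ i' → ∀ x ∈ A, ∀ y ∈ A, σ i x = σ i y → σ i' x = σ i' y → x = y) :
    Fintype.card ι ≤ A.card.choose 2 := by
  have hpair : ∀ i, ∃ x ∈ A, ∃ y ∈ A, x ≠ y ∧ σ i x = σ i y := fun i =>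
    Finset.exists_ne_map_eq_of_card_lt_of_maps_to (t := Finset.univ) (by simpa using hA)
      (fun _ _ => Finset.mem_coe.2 (Finset.mem_univ _))
  choose x hx y hy hxy hσxy using hpair
  have hmaps : Set.MapsTo (fun i => ({x i, y i} : Finset α)) (Finset.univ : Finset ι)
      (A.powersetCard 2) :=
    fun i _ => Finset.mem_powersetCard.2 ⟨Finset.insert_subset (hx i) (by simpa using hy i),
      Finset.card_pair (hxy i)⟩
  have hinj : Set.InjOn (fun i => ({x i, y i} : Finset α)) (Finset.univ : Finset ι) := by
    intro i _ i' _ h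
    by_contra hii'
    have hxi : x i ∈ ({x i', y i'} : Finset α) := by simp only at h; rw [← h]; simp
    have hyi : y i ∈ ({x i', y i'} : Finset α) := by simp only at h; rw [← h]; simp
    simp only [Finset.mem_insert, Finset.mem_singleton] at hxi hyi
    have hσ' : σ i' (x i) = σ i' (y i) := by
      rcases hxi with h₁ | h₁ <;> rcases hyi with h₂ | h₂ <;> simp only [h₁, h₂, hσxy i']
    exact hxy i (hσ i' i (Ne.symm hii') _ (hx i) _ (hy i) hσ' (hσxy i))
  simpa using Finset.card_le_card_of_injOn _ hmaps hinj

namespace SimpleGraph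

variable {V : Type*} {G : SimpleGraph V}

theorem fromRel_mono {r r' : V → V → Prop} (h : ∀ u v, r u v → r' u v) :
    fromRel r ≤ fromRel r' :=
  fun u v huv => (fromRel_adj ..).2 ⟨huv.1, huv.2.imp (h u v) (h v u)⟩

theorem not_connected_of_adj_closed (W : Set V) (hW : ∀ ⦃u v⦄, G.Adj u v → u ∈ W → v ∈ W)
    {u v : V} (hu : u ∈ W) (hv : v ∉ W) : ¬ G.Connected := by
  have hwalk : ∀ {x y : V}, G.Walk x y → x ∈ W → y ∈ W := by
    intro x y p
    induction p with
    | nil => exact id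
    | cons h _ ih => exact fun hx => ih (hW h hx)
  exact fun hG => hv (hwalk (hG u v).some hu)

/-- `x` and `y` are joined by the edge `xy` and by the paths `xzy`, `z ∈ Z`, which are pairwise
edge-disjoint; deleting at most `#Z` edges leaves one of them intact. -/
theorem reachable_deleteEdges_of_ncard_le {x y : V} (hxy : G.Adj x y) {Z : Finset V}
    (hZ : ∀ z ∈ Z, G.Adj x z ∧ G.Adj z y) {F : Set (Sym2 V)} (hF : F.Finite)
    (hcard : F.ncard ≤ Z.card) : (G.deleteEdges F).Reachable x y := by
  classical
  by_contra hnr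
  have mem_of_adj : ∀ {u v}, G.Adj u v → ¬ (G.deleteEdges F).Adj u v → s(u, v) ∈ F :=
    fun h h' => by_contra fun hn => h' ((deleteEdges_adj ..).2 ⟨h, hn⟩)
  have hxyF : s(x, y) ∈ F := mem_of_adj hxy fun h => hnr h.reachable
  let κ : V → Sym2 V := fun z => if s(x, z) ∈ F then s(x, z) else s(z, y)
  have hmaps : ∀ z ∈ (Z : Set V), κ z ∈ F \ {s(x, y)} := by
    intro z hz
    obtain ⟨hxz, hzy⟩ := hZ z hz
    by_cases hz : s(x, z) ∈ F
    · simp [κ, hz, hzy.ne, hxy.ne]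
    · have : s(z, y) ∈ F := mem_of_adj hzy fun h' =>
        hnr (((deleteEdges_adj ..).2 ⟨hxz, hz⟩).reachable.trans h'.reachable)
      simp [κ, hz, this, hxz.ne', hxy.ne']
  have hinj : Set.InjOn κ Z := by
    intro z hz z' hz' h
    obtain ⟨hxz, hzy⟩ := hZ z hz
    obtain ⟨hxz', hzy'⟩ := hZ z' hz'
    simp only [κ] at h
    split_ifs at h <;> grind [Sym2.eq_iff, hxz.ne, hzy.ne, hxz'.ne, hzy'.ne]
  have hle := Set.ncard_le_ncard_of_injOn κ hmaps hinj hF.sdiff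
  rw [Set.ncard_coe_finset, Set.ncard_sdiff_singleton_of_mem hxyF] at hle
  have hpos := Set.ncard_pos hF |>.2 ⟨_, hxyF⟩
  omega

end SimpleGraph

namespace Fin

variable {s : ℕ} [NeZero s]

theorem add_one_ne_self (hs : 2 ≤ s) (i : Fin s) : i + 1 ≠ i := by
  rw [Ne, add_eq_left, Fin.ext_iff, Fin.val_one', Fin.val_zero, Nat.mod_eq_of_lt hs]
  exact one_ne_zero

theorem add_one_add_one_ne_self (hs : 3 ≤ s) (i : Fin s) : i + 1 + 1 ≠ i := by
  rw [add_assoc, Ne, add_eq_left, Fin.ext_iff, Fin.val_add, Fin.val_one', Fin.val_zero,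
    Nat.mod_eq_of_lt (by omega : 1 < s), Nat.mod_eq_of_lt (by omega)]
  omega

end Fin

namespace SimpleGraph

variable {α : Type*} [Nonempty α] {s : ℕ} [NeZero s] {D : SimpleGraph (Fin s × α)}

open Fin.NatCast in
theorem connected_of_fiber_reachable (i₀ : Fin s) (hfib : ∀ i x y, D.Reachable (i, x) (i, y))
    (hlink : ∀ i, i ≠ i₀ → ∃ x y, D.Adj (i, x) (i + 1, y)) : D.Connected := by
  have hforward : ∀ t : ℕ, t < s → ∀ x y,
      D.Reachable (i₀ + 1, x) (i₀ + 1 + (t : Fin s), y) := by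
    intro t
    induction t with
    | zero => simpa using fun _ => hfib _
    | succ t ih =>
      intro ht x y
      have hne : i₀ + 1 + (t : Fin s) ≠ i₀ := by
        rw [add_assoc, Ne, add_eq_left, ← Nat.cast_one, ← Nat.cast_add, Fin.natCast_eq_zero,
          add_comm]
        exact Nat.not_dvd_of_pos_of_lt (by omega) (by omega)
      obtain ⟨x', y', h⟩ := hlink _ hne
      refine (ih (by omega) x x').trans (h.reachable.trans ?_)
      simpa [add_assoc] using hfib _ y' y
  have hbase : ∀ p, D.Reachable (i₀ + 1, Classical.arbitrary α) p := fun p => by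
    simpa using hforward (p.1 - (i₀ + 1)).val (Fin.is_lt _) _ p.2
  exact (connected_iff _).2 ⟨fun p q => (hbase p).symm.trans (hbase q), inferInstance⟩

theorem not_connected_of_two_cuts
    (hD : ∀ ⦃p q⦄, D.Adj p q → p.1 = q.1 ∨ q.1 = p.1 + 1 ∨ p.1 = q.1 + 1) {i i' : Fin s}
    (hii' : i ≠ i') (hcut : ∀ x y, ¬ D.Adj (i, x) (i + 1, y))
    (hcut' : ∀ x y, ¬ D.Adj (i', x) (i' + 1, y)) : ¬ D.Connected := by
  wlog hlt : i < i' generalizing i i'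
  · exact this hii'.symm hcut' hcut (lt_of_le_of_ne (not_lt.1 hlt) hii'.symm)
  obtain ⟨n, rfl⟩ := Nat.exists_eq_add_one_of_ne_zero (NeZero.ne s)
  have hstep : ∀ j, j ≠ i → j ≠ i' → (i < j ∧ j ≤ i' ↔ i < j + 1 ∧ j + 1 ≤ i') := by
    intro j hji hji'
    simp only [Fin.lt_def, Fin.le_def, Fin.val_add_one] at hlt ⊢
    rw [Ne, Fin.ext_iff] at hji hji'
    split_ifs with hj
    · have := Fin.is_le i'
      simp only [hj, Fin.val_last] at hji' ⊢
      omega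
    · omega
  refine not_connected_of_adj_closed {p | i < p.1 ∧ p.1 ≤ i'} ?_
    (u := (i', Classical.arbitrary α)) (v := (i, Classical.arbitrary α)) ⟨hlt, le_rfl⟩
    (fun h => lt_irrefl _ h.1)
  rintro ⟨j, x⟩ ⟨j', y⟩ hadj hj
  rcases hD hadj with h | h | h <;> simp only at h <;> subst h
  · exact hj
  · exact (hstep j (by rintro rfl; exact hcut x y hadj)
      (by rintro rfl; exact hcut' x y hadj)).1 hj
  · exact (hstep j' (by rintro rfl; exact hcut y x hadj.symm)
      (by rintro rfl; exact hcut' y x hadj.symm)).2 hj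

end SimpleGraph

/-- An edge colouring of the complete graph on `ℕ` grouped into pairs `{2j, 2j + 1}`: an edge
inside pair `j` gets colour `j`, and an edge between pairs `p < q` gets colour `p` if its ends
have equal parity and colour `q` otherwise. -/
def pairColour (x y : ℕ) : ℕ :=
  if x % 2 = y % 2 then min (x / 2) (y / 2) else max (x / 2) (y / 2)

theorem pairColour_comm (x y : ℕ) : pairColour x y = pairColour y x := by
  simp only [pairColour, eq_comm (a := x % 2), min_comm, max_comm]

def colourClass (n j : ℕ) : SimpleGraph (Fin n) where
  Adj x y := x ≠ y ∧ pairColour x y = j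
  symm := ⟨fun _ _ h => ⟨h.1.symm, pairColour_comm _ _ ▸ h.2⟩⟩
  loopless := ⟨fun _ h => h.1 rfl⟩

@[simp]
theorem colourClass_adj {n j : ℕ} {x y : Fin n} :
    (colourClass n j).Adj x y ↔ x ≠ y ∧ pairColour x y = j := Iff.rfl

/-- Colour class `j` is a double star: the centres `2j, 2j + 1` are adjacent and every other
vertex is adjacent to one of them. -/
theorem colourClass_connected {n j : ℕ} (hj : 2 * j + 1 < n) : (colourClass n j).Connected := by
  let centre : ℕ → Fin n := fun t => ⟨2 * j + t % 2, by omega⟩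
  have hcentre : ∀ t, (colourClass n j).Reachable (centre 0) (centre t) := by
    intro t
    rcases Nat.mod_two_eq_zero_or_one t with ht | ht
    · simp only [centre, ht]; rfl
    · refine Adj.reachable (colourClass_adj.2 ⟨?_, ?_⟩)
      · simp [centre, ht, Fin.ext_iff]
      · simp only [centre, ht, pairColour]; split_ifs <;> omega
  have hreach : ∀ v, (colourClass n j).Reachable (centre 0) v := by
    intro v
    by_cases hv : v.val / 2 = j
    · convert hcentre v using 1
      ext; simp only [centre]; omega
    · let t := if j < v.val / 2 then v.val % 2 else v.val % 2 + 1
      refine (hcentre t).trans (Adj.reachable (colourClass_adj.2 ⟨?_, ?_⟩))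
      · simp only [centre, Ne, Fin.ext_iff]; omega
      · simp only [centre, t, pairColour]; split_ifs <;> omega
  exact (connected_iff _).2 ⟨fun u v => (hreach u).symm.trans (hreach v), ⟨centre 0⟩⟩

section CliqueRing

variable {s k : ℕ} [NeZero s] {a b : Fin s → Fin k → Fin (2 * k + 1)}

theorem cliqueRing_eq : cliqueRing s k a b = SimpleGraph.fromRel fun p q =>
    (p.1 = q.1 ∧ p.2 ≠ q.2) ∨ (q.1 = p.1 + 1 ∧ ∃ m, p.2 = a p.1 m ∧ q.2 = b p.1 m) := by
  have hsucc : ∀ i j : Fin s, (j : ℕ) = ((i : ℕ) + 1) % s ↔ j = i + 1 := by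
    intro i j
    rw [Fin.ext_iff, Fin.val_add, Fin.val_one']
    simp
  simp only [cliqueRing, hsucc]

theorem cliqueRing_adj_fst {p q : Fin s × Fin (2 * k + 1)} (h : (cliqueRing s k a b).Adj p q) :
    p.1 = q.1 ∨ q.1 = p.1 + 1 ∨ p.1 = q.1 + 1 := by
  rw [cliqueRing_eq, fromRel_adj] at h
  tauto

theorem cliqueRing_adj_same {i : Fin s} {x y : Fin (2 * k + 1)} :
    (cliqueRing s k a b).Adj (i, x) (i, y) ↔ x ≠ y := by
  rw [cliqueRing_eq, fromRel_adj]
  exact ⟨fun h hxy => h.1 (by rw [hxy]),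
    fun hxy => ⟨by simpa using hxy, Or.inl (Or.inl ⟨rfl, hxy⟩)⟩⟩

theorem cliqueRing_adj_add_one (hs : 3 ≤ s) {i : Fin s} {x y : Fin (2 * k + 1)} :
    (cliqueRing s k a b).Adj (i, x) (i + 1, y) ↔ ∃ m, a i m = x ∧ b i m = y := by
  have hne := Fin.add_one_ne_self (by omega) i
  have hne' := Fin.add_one_add_one_ne_self hs i
  rw [cliqueRing_eq, fromRel_adj]
  constructor
  · rintro ⟨-, (⟨h, -⟩ | ⟨-, m, hx, hy⟩) | (⟨h, -⟩ | ⟨h, -⟩)⟩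
    · exact absurd h.symm hne
    · exact ⟨m, hx.symm, hy.symm⟩
    · exact absurd h hne
    · exact absurd h.symm hne'
  · rintro ⟨m, rfl, rfl⟩
    exact ⟨fun h => hne (congrArg Prod.fst h).symm, Or.inl (Or.inr ⟨rfl, m, rfl, rfl⟩)⟩

variable (a b) in
def matchingEdges (i : Fin s) : Finset (Sym2 (Fin s × Fin (2 * k + 1))) :=
  Finset.univ.image fun m => s((i, a i m), (i + 1, b i m))

theorem matchingEdges_subset_edgeSet (hs : 3 ≤ s) (i : Fin s) :
    ↑(matchingEdges a b i) ⊆ (cliqueRing s k a b).edgeSet := by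
  intro e he
  obtain ⟨m, -, rfl⟩ := Finset.mem_image.1 he
  exact (cliqueRing_adj_add_one hs).2 ⟨m, rfl, rfl⟩

theorem card_matchingEdges (hs : 2 ≤ s) {i : Fin s} (ha : Function.Injective (a i)) :
    (matchingEdges a b i).card = k := by
  rw [matchingEdges, Finset.card_image_of_injective, Finset.card_univ, Fintype.card_fin]
  intro m m' h
  rcases Sym2.eq_iff.1 h with ⟨h, -⟩ | ⟨h, -⟩
  · exact ha (congrArg Prod.snd h)
  · exact absurd (congrArg Prod.fst h) (Fin.add_one_ne_self hs i).symm

theorem disjoint_matchingEdges (hs : 3 ≤ s) {i i' : Fin s} (hii' : i ≠ i') :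
    Disjoint (matchingEdges a b i) (matchingEdges a b i') := by
  simp only [matchingEdges, Finset.disjoint_left, Finset.mem_image, Finset.mem_univ, true_and,
    not_exists]
  rintro _ ⟨m, rfl⟩ m' h
  rcases Sym2.eq_iff.1 h with ⟨h, -⟩ | ⟨h₁, h₂⟩
  · exact hii' (congrArg Prod.fst h).symm
  · have h₁ := congrArg Prod.fst h₁
    have h₂ := congrArg Prod.fst h₂
    simp only at h₁ h₂
    rw [h₁] at h₂
    exact Fin.add_one_add_one_ne_self hs i h₂

theorem card_matchingEdges_union (hs : 3 ≤ s) (ha : ∀ i, Function.Injective (a i))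
    {i i' : Fin s} (hii' : i ≠ i') : (matchingEdges a b i ∪ matchingEdges a b i').card = 2 * k := by
  rw [Finset.card_union_of_disjoint (disjoint_matchingEdges hs hii'),
    card_matchingEdges (by omega) (ha i), card_matchingEdges (by omega) (ha i'), two_mul]

end CliqueRing

section EdgeConnectivity

variable {s k : ℕ} [NeZero s] {a b : Fin s → Fin k → Fin (2 * k + 1)}

theorem cliqueRing_deleteEdges_reachable_fiber {F : Set (Sym2 (Fin s × Fin (2 * k + 1)))}
    (hF : F.Finite) (hcard : F.ncard < 2 * k) (i : Fin s) (x y : Fin (2 * k + 1)) :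
    ((cliqueRing s k a b).deleteEdges F).Reachable (i, x) (i, y) := by
  classical
  obtain rfl | hxy := eq_or_ne x y
  · rfl
  let Z := ({x, y} : Finset (Fin (2 * k + 1)))ᶜ.image (Prod.mk i)
  have hZ : Z.card = 2 * k - 1 := by
    rw [Finset.card_image_of_injective _ (Prod.mk_right_injective i), Finset.card_compl,
      Finset.card_pair hxy, Fintype.card_fin]
    omega
  refine reachable_deleteEdges_of_ncard_le (cliqueRing_adj_same.2 hxy) (Z := Z) ?_ hF (by omega)
  simp only [Z, Finset.mem_image, Finset.mem_compl, Finset.mem_insert, Finset.mem_singleton,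
    not_or]
  rintro _ ⟨z, ⟨hzx, hzy⟩, rfl⟩
  exact ⟨cliqueRing_adj_same.2 (Ne.symm hzx), cliqueRing_adj_same.2 hzy⟩

/-- Fewer than `2k` deleted edges cannot contain two whole matchings, so at most one pair of
consecutive cliques loses all its links. -/
theorem cliqueRing_deleteEdges_connected (hs : 3 ≤ s) (ha : ∀ i, Function.Injective (a i))
    {F : Set (Sym2 (Fin s × Fin (2 * k + 1)))} (hF : F ⊆ (cliqueRing s k a b).edgeSet)
    (hcard : F.ncard < 2 * k) : ((cliqueRing s k a b).deleteEdges F).Connected := by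
  classical
  have hfin : F.Finite := (Set.toFinite _).subset hF
  obtain ⟨i₀, hi₀⟩ : ∃ i₀, ∀ i, i ≠ i₀ → ¬ ↑(matchingEdges a b i) ⊆ F := by
    by_cases h : ∃ i₀, ↑(matchingEdges a b i₀) ⊆ F
    · obtain ⟨i₀, hi₀⟩ := h
      refine ⟨i₀, fun i hi hiF => hcard.not_ge ?_⟩
      calc 2 * k = (matchingEdges a b i ∪ matchingEdges a b i₀).card :=
            (card_matchingEdges_union hs ha hi).symm
        _ ≤ F.ncard := by
          rw [← Set.ncard_coe_finset, Finset.coe_union]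
          exact Set.ncard_le_ncard (Set.union_subset hiF hi₀) hfin
    · exact ⟨0, fun i _ hi => h ⟨i, hi⟩⟩
  refine connected_of_fiber_reachable i₀ (cliqueRing_deleteEdges_reachable_fiber hfin hcard)
    fun i hi => ?_
  obtain ⟨e, he, heF⟩ := Set.not_subset.1 (hi₀ i hi)
  obtain ⟨m, -, rfl⟩ := Finset.mem_image.1 he
  exact ⟨a i m, b i m,
    (deleteEdges_adj ..).2 ⟨(cliqueRing_adj_add_one hs).2 ⟨m, rfl, rfl⟩, heF⟩⟩

theorem not_connected_cliqueRing_deleteEdges_matchingEdges (hs : 3 ≤ s) {i i' : Fin s}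
    (hii' : i ≠ i') : ¬ ((cliqueRing s k a b).deleteEdges
      ↑(matchingEdges a b i ∪ matchingEdges a b i')).Connected := by
  classical
  have hcut : ∀ j, j = i ∨ j = i' → ∀ x y, ¬ ((cliqueRing s k a b).deleteEdges
      ↑(matchingEdges a b i ∪ matchingEdges a b i')).Adj (j, x) (j + 1, y) := by
    rintro j hj x y h
    obtain ⟨hadj, hnot⟩ := (deleteEdges_adj ..).1 h
    obtain ⟨m, rfl, rfl⟩ := (cliqueRing_adj_add_one hs).1 hadj
    refine hnot (Finset.mem_coe.2 (Finset.mem_union.2 ?_))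
    rcases hj with rfl | rfl
    · exact Or.inl (Finset.mem_image_of_mem _ (Finset.mem_univ m))
    · exact Or.inr (Finset.mem_image_of_mem _ (Finset.mem_univ m))
  exact not_connected_of_two_cuts (fun p q h => cliqueRing_adj_fst ((deleteEdges_le _) h)) hii'
    (hcut i (Or.inl rfl)) (hcut i' (Or.inr rfl))

theorem edgeConn_cliqueRing (hs : 3 ≤ s) (ha : ∀ i, Function.Injective (a i)) :
    edgeConn (cliqueRing s k a b) = 2 * k := by
  classical
  have hne : (0 : Fin s) ≠ 0 + 1 := (Fin.add_one_ne_self (by omega) 0).symm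
  have hmem : 2 * k ∈ {n | ∃ F : Set (Sym2 (Fin s × Fin (2 * k + 1))),
      F ⊆ (cliqueRing s k a b).edgeSet ∧ F.ncard = n ∧
        ¬((cliqueRing s k a b).deleteEdges F).Connected} := by
    refine ⟨_, ?_, ?_, not_connected_cliqueRing_deleteEdges_matchingEdges hs hne⟩
    · rw [Finset.coe_union]
      exact Set.union_subset (matchingEdges_subset_edgeSet hs _)
        (matchingEdges_subset_edgeSet hs _)
    · rw [Set.ncard_coe_finset, card_matchingEdges_union hs ha hne]
  refine le_antisymm (Nat.sInf_le hmem) (le_csInf ⟨_, hmem⟩ ?_)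
  rintro n ⟨F, hF, rfl, hdisc⟩
  exact not_lt.1 fun h => hdisc (cliqueRing_deleteEdges_connected hs ha hF h)

end EdgeConnectivity

section Codes

variable {s k : ℕ} [NeZero s] {a b : Fin s → Fin k → Fin (2 * k + 1)}

def layer (a b : Fin s → Fin k → Fin (2 * k + 1)) (j : Fin k) :
    SimpleGraph (Fin s × Fin (2 * k + 1)) :=
  SimpleGraph.fromRel fun p q => (p.1 = q.1 ∧ (colourClass (2 * k + 1) j).Adj p.2 q.2) ∨
    (q.1 = p.1 + 1 ∧ p.2 = a p.1 j ∧ q.2 = b p.1 j)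

theorem layer_le (j : Fin k) : layer a b j ≤ cliqueRing s k a b := by
  rw [cliqueRing_eq]
  exact fromRel_mono fun p q =>
    Or.imp (And.imp_right fun h => h.1) fun ⟨h, hx, hy⟩ => ⟨h, j, hx, hy⟩

theorem layer_connected (hs : 2 ≤ s) (j : Fin k) : (layer a b j).Connected := by
  refine connected_of_fiber_reachable 0 (fun i x y => ?_) fun i _ => ⟨a i j, b i j, ?_⟩
  · let f : colourClass (2 * k + 1) j →g layer a b j :=
      ⟨Prod.mk i, fun h => (fromRel_adj ..).2
        ⟨fun h' => h.1 (congrArg Prod.snd h'), Or.inl (Or.inl ⟨rfl, h⟩)⟩⟩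
    exact ((colourClass_connected (by omega)).preconnected x y).map f
  · exact (fromRel_adj ..).2 ⟨fun h => Fin.add_one_ne_self hs i (congrArg Prod.fst h).symm,
      Or.inl (Or.inr ⟨rfl, rfl, rfl⟩)⟩

theorem pairwise_disjoint_layer (hs : 3 ≤ s) (ha : ∀ i, Function.Injective (a i)) :
    Pairwise (Disjoint on layer a b) := by
  intro j j' hjj'
  rw [onFun, disjoint_iff_inf_le]
  rintro ⟨i, x⟩ ⟨i', y⟩ ⟨h₁, h₂⟩
  simp only [layer, fromRel_adj, colourClass_adj] at h₁ h₂
  have hjj'' : (j : ℕ) ≠ j' := Fin.val_ne_of_ne hjj'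
  -- an edge inside a clique determines its colour, a matching edge its index
  grind [Fin.add_one_ne_self, Fin.add_one_add_one_ne_self, pairColour_comm, Injective]

variable (a b) in
def codeword (S : Finset (Fin k)) : SimpleGraph (Fin s × Fin (2 * k + 1)) :=
  S.sup (layer a b)

theorem codeword_le (S : Finset (Fin k)) : codeword a b S ≤ cliqueRing s k a b :=
  Finset.sup_le fun j _ => layer_le j

theorem symmDiff_codeword (hs : 3 ≤ s) (ha : ∀ i, Function.Injective (a i))
    (S T : Finset (Fin k)) :
    symmDiff (codeword a b S) (codeword a b T) = codeword a b (symmDiff S T) :=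
  Finset.sup_symmDiff_sup_of_pairwise_disjoint (pairwise_disjoint_layer hs ha) S T

theorem codeword_connected (hs : 2 ≤ s) {S : Finset (Fin k)} (hS : S.Nonempty) :
    (codeword a b S).Connected :=
  let ⟨_, hj⟩ := hS
  (layer_connected hs _).mono (Finset.le_sup hj)

theorem codeword_injective (hs : 3 ≤ s) (ha : ∀ i, Function.Injective (a i)) :
    Function.Injective (codeword a b) := by
  intro S T h
  by_contra hST
  have hbot := codeword_connected (a := a) (b := b) (by omega) (Finset.symmDiff_nonempty.2 hST)
  rw [← symmDiff_codeword hs ha, h, symmDiff_self] at hbot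
  have := reachable_bot.1 (hbot.preconnected (0, 0) (0 + 1, 0))
  exact Fin.add_one_ne_self (by omega) 0 (congrArg Prod.fst this).symm

theorem isConnCode_range_codeword (hs : 3 ≤ s) (ha : ∀ i, Function.Injective (a i)) :
    IsConnCode (cliqueRing s k a b) (Set.range (codeword a b)) := by
  refine ⟨Set.forall_mem_range.2 codeword_le, ?_⟩
  rintro _ ⟨S, rfl⟩ _ ⟨T, rfl⟩ hne
  rw [symmDiff_codeword hs ha]
  exact codeword_connected (by omega) (Finset.symmDiff_nonempty.2 fun h => hne (h ▸ rfl))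

theorem ncard_range_codeword (hs : 3 ≤ s) (ha : ∀ i, Function.Injective (a i)) :
    (Set.range (codeword a b)).ncard = 2 ^ k := by
  rw [← Set.image_univ, Set.ncard_image_of_injective _ (codeword_injective hs ha), Set.ncard_univ,
    Nat.card_eq_fintype_card, Fintype.card_finset, Fintype.card_fin]

variable (a b) in
def matchingTrace (i : Fin s) (G : SimpleGraph (Fin s × Fin (2 * k + 1))) : Set (Fin k) :=
  {m | G.Adj (i, a i m) (i + 1, b i m)}

/-- Where two subgraphs of `H(s, k)` have the same trace on the matching `M_i`, their symmetric
difference has no edge between `K(i)` and `K(i + 1)`. -/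
theorem not_connected_symmDiff_of_matchingTrace_eq (hs : 3 ≤ s)
    {G₁ G₂ : SimpleGraph (Fin s × Fin (2 * k + 1))} (h₁ : G₁ ≤ cliqueRing s k a b)
    (h₂ : G₂ ≤ cliqueRing s k a b) {i i' : Fin s} (hii' : i ≠ i')
    (hi : matchingTrace a b i G₁ = matchingTrace a b i G₂)
    (hi' : matchingTrace a b i' G₁ = matchingTrace a b i' G₂) :
    ¬ (symmDiff G₁ G₂).Connected := by
  have hle : symmDiff G₁ G₂ ≤ cliqueRing s k a b :=
    symmDiff_le (le_sup_of_le_right h₁) (le_sup_of_le_right h₂)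
  have hcut : ∀ j, matchingTrace a b j G₁ = matchingTrace a b j G₂ →
      ∀ x y, ¬ (symmDiff G₁ G₂).Adj (j, x) (j + 1, y) := by
    intro j hj x y h
    obtain ⟨m, rfl, rfl⟩ := (cliqueRing_adj_add_one hs).1 (hle h)
    have hiff : G₁.Adj (j, a j m) (j + 1, b j m) ↔ G₂.Adj (j, a j m) (j + 1, b j m) :=
      Set.ext_iff.1 hj m
    simp only [symmDiff_def, sup_adj, sdiff_adj, hiff] at h
    tauto
  exact not_connected_of_two_cuts (fun p q h => cliqueRing_adj_fst (hle h)) hii'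
    (hcut i hi) (hcut i' hi')

theorem choose_two_two_pow_add_one_le (k : ℕ) :
    (2 ^ k + 1).choose 2 ≤ 2 ^ (k - 1) * (2 ^ k + 1) := by
  have h : 2 ^ k ≤ 2 * 2 ^ (k - 1) := by
    rw [← pow_succ']
    exact Nat.pow_le_pow_right two_pos (by omega)
  rw [Nat.choose_two_right, Nat.add_sub_cancel]
  refine Nat.div_le_of_le_mul ?_
  calc (2 ^ k + 1) * 2 ^ k ≤ (2 ^ k + 1) * (2 * 2 ^ (k - 1)) := Nat.mul_le_mul_left _ h
    _ = 2 * (2 ^ (k - 1) * (2 ^ k + 1)) := by ring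

theorem ncard_le_of_isConnCode (hs : 2 ^ (k - 1) * (2 ^ k + 1) < s) (hs₃ : 3 ≤ s)
    {𝒢 : Set (SimpleGraph (Fin s × Fin (2 * k + 1)))}
    (h𝒢 : IsConnCode (cliqueRing s k a b) 𝒢) : 𝒢.ncard ≤ 2 ^ k := by
  classical
  by_contra! hbig
  obtain ⟨A, hA𝒢, hAcard⟩ := Finset.exists_subset_card_eq (n := 2 ^ k + 1)
    (s := (Set.toFinite 𝒢).toFinset) (by rw [← Set.ncard_eq_toFinset_card]; omega)
  have hA : ∀ G ∈ A, G ∈ 𝒢 := fun G hG => (Set.Finite.mem_toFinset _).1 (hA𝒢 hG)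
  have hcard := card_le_choose_two_of_no_double_agreement A (matchingTrace a b)
    (by rw [Fintype.card_set, Fintype.card_fin, hAcard]; omega)
    fun i i' hii' G hG G' hG' hi hi' => by_contra fun hne =>
      not_connected_symmDiff_of_matchingTrace_eq hs₃ (h𝒢.1 G (hA G hG)) (h𝒢.1 G' (hA G' hG'))
        hii' hi hi' (h𝒢.2 G (hA G hG) G' (hA G' hG') hne)
  rw [Fintype.card_fin, hAcard] at hcard
  exact hs.not_ge (hcard.trans (choose_two_two_pow_add_one_le k))

theorem mCode_cliqueRing (hs : 2 ^ (k - 1) * (2 ^ k + 1) < s) (hs₃ : 3 ≤ s)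
    (ha : ∀ i, Function.Injective (a i)) : mCode (cliqueRing s k a b) = 2 ^ k := by
  have hmem : 2 ^ k ∈ {n | ∃ 𝒢, IsConnCode (cliqueRing s k a b) 𝒢 ∧ 𝒢.ncard = n} :=
    ⟨_, isConnCode_range_codeword hs₃ ha, ncard_range_codeword hs₃ ha⟩
  have hbdd : ∀ n ∈ {n | ∃ 𝒢, IsConnCode (cliqueRing s k a b) 𝒢 ∧ 𝒢.ncard = n}, n ≤ 2 ^ k := by
    rintro n ⟨𝒢, h𝒢, rfl⟩
    exact ncard_le_of_isConnCode hs hs₃ h𝒢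
  exact le_antisymm (csSup_le ⟨_, hmem⟩ hbdd) (le_csSup ⟨_, hbdd⟩ hmem)

end Codes

theorem stmt12_general (k s : ℕ) (hs : 2 ^ (k - 1) * (2 ^ k + 1) < s)
    (a b : Fin s → Fin k → Fin (2 * k + 1))
    (ha : ∀ i, Function.Injective (a i)) :
    edgeConn (cliqueRing s k a b) = 2 * k ∧ mCode (cliqueRing s k a b) = 2 ^ k := by
  have hs₃ : 3 ≤ s := by
    have : 2 ≤ 2 ^ (k - 1) * (2 ^ k + 1) :=
      Nat.mul_le_mul Nat.one_le_two_pow (Nat.succ_le_succ Nat.one_le_two_pow)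
    omega
  have : NeZero s := ⟨by omega⟩
  exact ⟨edgeConn_cliqueRing hs₃ ha, mCode_cliqueRing hs hs₃ ha⟩

/-- For `k ≥ 1` and `s > 2^(k-1) (2^k + 1)`, the graph `H(s, k)` has edge-connectivity
exactly `2k` and satisfies `m(H(s,k)) = 2 ^ k`. -/
theorem stmt12 (k s : ℕ) (hk : 1 ≤ k) (hs : 2 ^ (k - 1) * (2 ^ k + 1) < s)
    (a b : Fin s → Fin k → Fin (2 * k + 1))
    (ha : ∀ i, Function.Injective (a i)) (hb : ∀ i, Function.Injective (b i)) :
    edgeConn (cliqueRing s k a b) = 2 * k ∧ mCode (cliqueRing s k a b) = 2 ^ k :=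
  stmt12_general k s hs a b ha
end
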